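/- arXiv:2307.09470 — 8 statements merged into one kernel-verified Lean document; each statement's English description precedes it below -/
import Mathlib

section
/- In a zero-sum polymatrix game whose interaction graph is a star with center player 1, the Nash-equilibrium payoff of the center player is unique: it equals the value max over π_1 ∈ Δ(A_1) of min over (π_i)_{i≠1} ∈ Π_{i≠1} Δ(A_i) of Σ_{i≠1} π_1^T r_{1,i} π_i, and this max-min equals the corresponding min-max by the minimax theorem applied to the bilinear payoff on the compact convex sets Δ(A_1) and Π_{i≠1} Δ(A_i). -/
/-!
The Nash equilibrium `π*` is a saddle point of the center's payoff
`f(μ, ρ) = ∑_{j ≠ 1} μᵀ r_{1,j} ρ_j` on `Δ(A₁) × ∏_{j ≠ 1} Δ(A_j)`. The center's condition says that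
`π*₁` maximizes `f(·, π*₋₁)`. For the leaves, zero-sum turns `f(π*₁, ρ)` into minus the sum of the
leaves' payoffs against `π*₁`, each of which is maximized at `π*_j`, so `π*₋₁` minimizes
`f(π*₁, ·)`. At a saddle point of a bounded function, max-min and min-max both equal its value.
-/

open Finset Set

section Saddle

variable {α ι κ : Type*} [ConditionallyCompleteLattice α] {f : ι → κ → α} {i₀ : ι} {k₀ : κ}

theorem ciSup_ciInf_eq_of_isSaddle (hrow : ∀ i, BddBelow (range (f i)))
    (hmax : ∀ i, f i k₀ ≤ f i₀ k₀) (hmin : ∀ k, f i₀ k₀ ≤ f i₀ k) :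
    ⨆ i, ⨅ k, f i k = f i₀ k₀ := by
  have : Nonempty ι := ⟨i₀⟩
  have : Nonempty κ := ⟨k₀⟩
  have hinf_le : ∀ i, ⨅ k, f i k ≤ f i₀ k₀ := fun i => (ciInf_le (hrow i) k₀).trans (hmax i)
  refine le_antisymm (ciSup_le hinf_le)
    ((le_ciInf hmin).trans (le_ciSup (f := fun i => ⨅ k, f i k) ?_ i₀))
  exact ⟨f i₀ k₀, by rintro _ ⟨i, rfl⟩; exact hinf_le i⟩

theorem ciInf_ciSup_eq_of_isSaddle (hcol : ∀ k, BddAbove (range fun i => f i k))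
    (hmax : ∀ i, f i k₀ ≤ f i₀ k₀) (hmin : ∀ k, f i₀ k₀ ≤ f i₀ k) :
    ⨅ k, ⨆ i, f i k = f i₀ k₀ := by
  have : Nonempty ι := ⟨i₀⟩
  have : Nonempty κ := ⟨k₀⟩
  have le_sup : ∀ k, f i₀ k₀ ≤ ⨆ i, f i k := fun k => (hmin k).trans (le_ciSup (hcol k) i₀)
  refine le_antisymm ((ciInf_le ?_ k₀).trans (ciSup_le hmax)) (le_ciInf le_sup)
  exact ⟨f i₀ k₀, by rintro _ ⟨k, rfl⟩; exact le_sup k⟩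

end Saddle

theorem abs_bilinear_le_sum_abs {α β : Type*} [Fintype α] [Fintype β] (M : α → β → ℝ)
    {p : α → ℝ} {q : β → ℝ} (hp : p ∈ stdSimplex ℝ α) (hq : q ∈ stdSimplex ℝ β) :
    |∑ a, ∑ b, p a * M a b * q b| ≤ ∑ a, ∑ b, |M a b| := by
  calc |∑ a, ∑ b, p a * M a b * q b|
      ≤ ∑ a, ∑ b, |p a * M a b * q b| :=
        (abs_sum_le_sum_abs _ _).trans (sum_le_sum fun a _ => abs_sum_le_sum_abs _ _)
    _ ≤ ∑ a, ∑ b, |M a b| := sum_le_sum fun a _ => sum_le_sum fun b _ => by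
        obtain ⟨hp₀, hp₁⟩ := mem_Icc_of_mem_stdSimplex hp a
        obtain ⟨hq₀, hq₁⟩ := mem_Icc_of_mem_stdSimplex hq b
        rw [abs_mul, abs_mul, abs_of_nonneg hp₀, abs_of_nonneg hq₀]
        exact (mul_le_of_le_one_right (by positivity) hq₁).trans
          (mul_le_of_le_one_left (abs_nonneg _) hp₁)

section StarGame

variable {N : Type*} [DecidableEq N] {one : N} {A : N → Type*}

def withCenter (x : A one → ℝ) (ρ : ∀ j : {j : N // j ≠ one}, A j.1 → ℝ) : ∀ i, A i → ℝ :=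
  fun i => if h : i = one then h ▸ x else ρ ⟨i, h⟩

@[simp]
theorem withCenter_one (x : A one → ℝ) (ρ : ∀ j : {j : N // j ≠ one}, A j.1 → ℝ) :
    withCenter x ρ one = x := by
  simp [withCenter]

@[simp]
theorem withCenter_of_ne (x : A one → ℝ) (ρ : ∀ j : {j : N // j ≠ one}, A j.1 → ℝ)
    (j : {j : N // j ≠ one}) : withCenter x ρ j = ρ j := by
  simp [withCenter, j.2]

variable [∀ i, Fintype (A i)]

theorem withCenter_mem_stdSimplex {x : A one → ℝ} {ρ : ∀ j : {j : N // j ≠ one}, A j.1 → ℝ}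
    (hx : x ∈ stdSimplex ℝ (A one)) (hρ : ∀ j : {j : N // j ≠ one}, ρ j ∈ stdSimplex ℝ (A j.1))
    (i : N) :
    withCenter x ρ i ∈ stdSimplex ℝ (A i) := by
  by_cases h : i = one
  · subst h
    simpa using hx
  · simpa [withCenter, h] using hρ ⟨i, h⟩

variable [Fintype N]

theorem sum_erase_eq_sum_subtype_ne {M : Type*} [AddCommMonoid M] (g : N → M) :
    ∑ i ∈ univ.erase one, g i = ∑ j : {j : N // j ≠ one}, g j :=
  sum_subtype _ (fun _ => by simp) g

variable (one A) in
def IsStarZeroSum (r1 : ∀ i, A one → A i → ℝ) (ri1 : ∀ i, A i → A one → ℝ) : Prop :=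
  ∀ π : ∀ i, A i → ℝ, (∀ i a, 0 ≤ π i a) → (∀ i, ∑ a, π i a = 1) →
    ∑ i ∈ univ.erase one,
      ((∑ a1, ∑ ai, π one a1 * r1 i a1 ai * π i ai) +
       (∑ ai, ∑ a1, π i ai * ri1 i ai a1 * π one a1)) = 0

variable {r1 : ∀ i, A one → A i → ℝ} {ri1 : ∀ i, A i → A one → ℝ}

theorem IsStarZeroSum.center_payoff_eq_neg (hzs : IsStarZeroSum one A r1 ri1)
    {x : A one → ℝ} {ρ : ∀ j : {j : N // j ≠ one}, A j.1 → ℝ}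
    (hx : x ∈ stdSimplex ℝ (A one))
    (hρ : ∀ j : {j : N // j ≠ one}, ρ j ∈ stdSimplex ℝ (A j.1)) :
    ∑ j : {j : N // j ≠ one}, ∑ a1, ∑ ai, x a1 * r1 j a1 ai * ρ j ai =
      -∑ j : {j : N // j ≠ one}, ∑ ai, ∑ a1, ρ j ai * ri1 j ai a1 * x a1 := by
  have hmem := withCenter_mem_stdSimplex hx hρ
  have h := hzs (withCenter x ρ) (fun i => (hmem i).1) (fun i => (hmem i).2)
  simp only [sum_erase_eq_sum_subtype_ne, withCenter_one, withCenter_of_ne,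
    sum_add_distrib] at h
  exact eq_neg_of_add_eq_zero_left h

theorem IsStarZeroSum.center_payoff_le (hzs : IsStarZeroSum one A r1 ri1)
    {x : A one → ℝ} {σ ρ : ∀ j : {j : N // j ≠ one}, A j.1 → ℝ} (hx : x ∈ stdSimplex ℝ (A one))
    (hσ : ∀ j : {j : N // j ≠ one}, σ j ∈ stdSimplex ℝ (A j.1))
    (hρ : ∀ j : {j : N // j ≠ one}, ρ j ∈ stdSimplex ℝ (A j.1))
    (hbest : ∀ j : {j : N // j ≠ one},
      ∑ ai, ∑ a1, ρ j ai * ri1 j ai a1 * x a1 ≤ ∑ ai, ∑ a1, σ j ai * ri1 j ai a1 * x a1) :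
    ∑ j : {j : N // j ≠ one}, ∑ a1, ∑ ai, x a1 * r1 j a1 ai * σ j ai ≤
      ∑ j : {j : N // j ≠ one}, ∑ a1, ∑ ai, x a1 * r1 j a1 ai * ρ j ai := by
  rw [hzs.center_payoff_eq_neg hx hσ, hzs.center_payoff_eq_neg hx hρ]
  exact neg_le_neg (sum_le_sum fun j _ => hbest j)

end StarGame

theorem star_zeroSum_center_value_unique_general {N : Type*} [Fintype N] [DecidableEq N] (one : N)
    (A : N → Type*) [∀ i, Fintype (A i)]
    (r1 : ∀ i, A one → A i → ℝ) (ri1 : ∀ i, A i → A one → ℝ)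
    -- zero-sum over all product mixed-strategy profiles
    (hzs : ∀ π : ∀ i, A i → ℝ, (∀ i a, 0 ≤ π i a) → (∀ i, ∑ a, π i a = 1) →
      ∑ i ∈ Finset.univ.erase one,
        ((∑ a1, ∑ ai, π one a1 * r1 i a1 ai * π i ai) +
         (∑ ai, ∑ a1, π i ai * ri1 i ai a1 * π one a1)) = 0)
    -- a Nash equilibrium π* (a product profile where no player can improve by deviating)
    (πs : ∀ i, A i → ℝ)
    (hπnn : ∀ i a, 0 ≤ πs i a) (hπsum : ∀ i, ∑ a, πs i a = 1)
    (hNEcenter : ∀ μ : A one → ℝ, (∀ a, 0 ≤ μ a) → (∑ a, μ a = 1) →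
      (∑ i ∈ Finset.univ.erase one, ∑ a1, ∑ ai, μ a1 * r1 i a1 ai * πs i ai) ≤
      (∑ i ∈ Finset.univ.erase one, ∑ a1, ∑ ai, πs one a1 * r1 i a1 ai * πs i ai))
    (hNEother : ∀ i, i ≠ one → ∀ μ : A i → ℝ, (∀ a, 0 ≤ μ a) → (∑ a, μ a = 1) →
      (∑ ai, ∑ a1, μ ai * ri1 i ai a1 * πs one a1) ≤
      (∑ ai, ∑ a1, πs i ai * ri1 i ai a1 * πs one a1)) :
    (∑ i ∈ Finset.univ.erase one, ∑ a1, ∑ ai, πs one a1 * r1 i a1 ai * πs i ai) =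
      (⨆ μ1 : {p : A one → ℝ // p ∈ stdSimplex ℝ (A one)},
        ⨅ ρ : ∀ j : {j : N // j ≠ one}, {p : A j.1 → ℝ // p ∈ stdSimplex ℝ (A j.1)},
          ∑ j : {j : N // j ≠ one}, ∑ a1, ∑ ai, μ1.1 a1 * r1 j.1 a1 ai * (ρ j).1 ai) ∧
    (⨆ μ1 : {p : A one → ℝ // p ∈ stdSimplex ℝ (A one)},
        ⨅ ρ : ∀ j : {j : N // j ≠ one}, {p : A j.1 → ℝ // p ∈ stdSimplex ℝ (A j.1)},
          ∑ j : {j : N // j ≠ one}, ∑ a1, ∑ ai, μ1.1 a1 * r1 j.1 a1 ai * (ρ j).1 ai) =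
    (⨅ ρ : ∀ j : {j : N // j ≠ one}, {p : A j.1 → ℝ // p ∈ stdSimplex ℝ (A j.1)},
        ⨆ μ1 : {p : A one → ℝ // p ∈ stdSimplex ℝ (A one)},
          ∑ j : {j : N // j ≠ one}, ∑ a1, ∑ ai, μ1.1 a1 * r1 j.1 a1 ai * (ρ j).1 ai) := by
  let f (μ : stdSimplex ℝ (A one)) (ρ : ∀ j : {j : N // j ≠ one}, stdSimplex ℝ (A j)) : ℝ :=
    ∑ j : {j : N // j ≠ one}, ∑ a1, ∑ ai, μ.1 a1 * r1 j.1 a1 ai * (ρ j).1 ai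
  let μ₀ : stdSimplex ℝ (A one) := ⟨πs one, hπnn one, hπsum one⟩
  let ρ₀ (j : {j : N // j ≠ one}) : stdSimplex ℝ (A j) := ⟨πs j, hπnn j, hπsum j⟩
  have hmax (μ) : f μ ρ₀ ≤ f μ₀ ρ₀ := by
    have h := hNEcenter μ.1 μ.2.1 μ.2.2
    rwa [sum_erase_eq_sum_subtype_ne, sum_erase_eq_sum_subtype_ne] at h
  have hmin (ρ) : f μ₀ ρ₀ ≤ f μ₀ ρ :=
    IsStarZeroSum.center_payoff_le hzs μ₀.2 (fun j => (ρ₀ j).2) (fun j => (ρ j).2)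
      fun j => hNEother j j.2 _ (ρ j).2.1 (ρ j).2.2
  set B := ∑ j : {j : N // j ≠ one}, ∑ a1, ∑ ai, |r1 j a1 ai|
  have hbound (μ ρ) : |f μ ρ| ≤ B :=
    (abs_sum_le_sum_abs _ _).trans
      (sum_le_sum fun j _ => abs_bilinear_le_sum_abs _ μ.2 (ρ j).2)
  have hrow (μ) : BddBelow (range (f μ)) :=
    ⟨-B, by rintro _ ⟨ρ, rfl⟩; exact neg_le_of_abs_le (hbound μ ρ)⟩
  have hcol (ρ) : BddAbove (range fun μ => f μ ρ) :=
    ⟨B, by rintro _ ⟨μ, rfl⟩; exact le_of_abs_le (hbound μ ρ)⟩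
  rw [sum_erase_eq_sum_subtype_ne]
  exact ⟨(ciSup_ciInf_eq_of_isSaddle hrow hmax hmin).symm,
    (ciSup_ciInf_eq_of_isSaddle hrow hmax hmin).trans
      (ciInf_ciSup_eq_of_isSaddle hcol hmax hmin).symm⟩

/-- In a zero-sum polymatrix game whose interaction graph is a star with center player `one`,
the Nash-equilibrium payoff of the center is unique: it equals
`max_{π₁ ∈ Δ(A₁)} min_{(πᵢ)_{i≠1}} ∑_{i≠1} π₁ᵀ r_{1,i} πᵢ`, and this max-min equals the
corresponding min-max. -/
theorem star_zeroSum_center_value_unique {N : Type*} [Fintype N] [DecidableEq N] (one : N)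
    (A : N → Type*) [∀ i, Fintype (A i)] [∀ i, Nonempty (A i)]
    (r1 : ∀ i, A one → A i → ℝ) (ri1 : ∀ i, A i → A one → ℝ)
    -- zero-sum over all product mixed-strategy profiles
    (hzs : ∀ π : ∀ i, A i → ℝ, (∀ i a, 0 ≤ π i a) → (∀ i, ∑ a, π i a = 1) →
      ∑ i ∈ Finset.univ.erase one,
        ((∑ a1, ∑ ai, π one a1 * r1 i a1 ai * π i ai) +
         (∑ ai, ∑ a1, π i ai * ri1 i ai a1 * π one a1)) = 0)
    -- a Nash equilibrium π* (a product profile where no player can improve by deviating)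
    (πs : ∀ i, A i → ℝ)
    (hπnn : ∀ i a, 0 ≤ πs i a) (hπsum : ∀ i, ∑ a, πs i a = 1)
    (hNEcenter : ∀ μ : A one → ℝ, (∀ a, 0 ≤ μ a) → (∑ a, μ a = 1) →
      (∑ i ∈ Finset.univ.erase one, ∑ a1, ∑ ai, μ a1 * r1 i a1 ai * πs i ai) ≤
      (∑ i ∈ Finset.univ.erase one, ∑ a1, ∑ ai, πs one a1 * r1 i a1 ai * πs i ai))
    (hNEother : ∀ i, i ≠ one → ∀ μ : A i → ℝ, (∀ a, 0 ≤ μ a) → (∑ a, μ a = 1) →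
      (∑ ai, ∑ a1, μ ai * ri1 i ai a1 * πs one a1) ≤
      (∑ ai, ∑ a1, πs i ai * ri1 i ai a1 * πs one a1)) :
    (∑ i ∈ Finset.univ.erase one, ∑ a1, ∑ ai, πs one a1 * r1 i a1 ai * πs i ai) =
      (⨆ μ1 : {p : A one → ℝ // p ∈ stdSimplex ℝ (A one)},
        ⨅ ρ : ∀ j : {j : N // j ≠ one}, {p : A j.1 → ℝ // p ∈ stdSimplex ℝ (A j.1)},
          ∑ j : {j : N // j ≠ one}, ∑ a1, ∑ ai, μ1.1 a1 * r1 j.1 a1 ai * (ρ j).1 ai) ∧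
    (⨆ μ1 : {p : A one → ℝ // p ∈ stdSimplex ℝ (A one)},
        ⨅ ρ : ∀ j : {j : N // j ≠ one}, {p : A j.1 → ℝ // p ∈ stdSimplex ℝ (A j.1)},
          ∑ j : {j : N // j ≠ one}, ∑ a1, ∑ ai, μ1.1 a1 * r1 j.1 a1 ai * (ρ j).1 ai) =
    (⨅ ρ : ∀ j : {j : N // j ≠ one}, {p : A j.1 → ℝ // p ∈ stdSimplex ℝ (A j.1)},
        ⨆ μ1 : {p : A one → ℝ // p ∈ stdSimplex ℝ (A one)},
          ∑ j : {j : N // j ≠ one}, ∑ a1, ∑ ai, μ1.1 a1 * r1 j.1 a1 ai * (ρ j).1 ai) :=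
  star_zeroSum_center_value_unique_general one A r1 ri1 hzs πs hπnn hπsum hNEcenter hNEother
end

section
/- In a zero-sum polymatrix game, the linear program minimize Σ_i v_i subject to v_i ≥ r_i(e_{a_i}, π_{-i}) for all i and a_i, and π a product mixed strategy, has optimal value 0; moreover, if (π*, v*) is an ε-optimal feasible solution, then π* is an ε-approximate Nash equilibrium, and r_i(π*) ≤ v_i* ≤ r_i(π*) + ε for every player i. -/
/-!
The bilinear form `B σ π = ∑ᵢ ∑_{aᵢ} σᵢ(aᵢ) rᵢ(e_{aᵢ}, π₋ᵢ)` vanishes on the diagonal by the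
zero-sum property, so the Sion–von Neumann minimax theorem on the compact convex set of mixed
profiles gives a `π` with `B σ π ≤ 0` for every `σ`. This `π` is a Nash equilibrium, and its
best-response values form a feasible point of value `0`. In the other direction, averaging the
constraints of player `i` with the weights `πᵢ` gives `rᵢ(π) ≤ vᵢ`, and summing over `i` shows that
every feasible value is at least `∑ᵢ rᵢ(π) = 0`. The slacks `vᵢ - rᵢ(π)` are therefore
nonnegative and sum to at most `ε`, so each of them is at most `ε`.
-/

open Finset

theorem LinearMap.BilinForm.exists_mem_forall_apply_nonpos
    {E : Type*} [NormedAddCommGroup E] [NormedSpace ℝ E] [FiniteDimensional ℝ E]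
    {S : Set E} (hne : S.Nonempty) (hconv : Convex ℝ S) (hcpt : IsCompact S)
    (B : LinearMap.BilinForm ℝ E) (hB : ∀ x ∈ S, B x x ≤ 0) :
    ∃ x ∈ S, ∀ y ∈ S, B y x ≤ 0 := by
  obtain ⟨x, hx, z, hz, hsaddle⟩ := Sion.exists_isSaddlePointOn (f := fun x y => B y x)
    hne hconv hcpt
    (fun y _ => (B y).continuous_of_finiteDimensional.continuousOn.lowerSemicontinuousOn)
    (fun y _ => ((B y).convexOn hconv).quasiconvexOn)
    hconv hne hcpt
    (fun x _ => (B.flip x).continuous_of_finiteDimensional.continuousOn.upperSemicontinuousOn)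
    (fun x _ => ((B.flip x).concaveOn hconv).quasiconcaveOn)
  exact ⟨x, hx, fun y hy => (hsaddle z hz y hy).trans (hB z hz)⟩

theorem sum_mul_le_of_mem_stdSimplex {α : Type*} [Fintype α] {μ f : α → ℝ} {c : ℝ}
    (hμ : μ ∈ stdSimplex ℝ α) (hf : ∀ a, f a ≤ c) : ∑ a, μ a * f a ≤ c :=
  calc ∑ a, μ a * f a ≤ ∑ a, μ a * c :=
        sum_le_sum fun a _ => mul_le_mul_of_nonneg_left (hf a) (hμ.1 a)
    _ = c := by rw [← sum_mul, hμ.2, one_mul]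

namespace Polymatrix

variable {N : Type*} (A : N → Type*) [∀ i, Fintype (A i)]

def mixedProfiles : Set (∀ i, A i → ℝ) :=
  Set.univ.pi fun i => stdSimplex ℝ (A i)

theorem mem_mixedProfiles {π : ∀ i, A i → ℝ} :
    π ∈ mixedProfiles A ↔ (∀ i a, 0 ≤ π i a) ∧ ∀ i, ∑ a, π i a = 1 :=
  by simp [mixedProfiles, stdSimplex, forall_and]

theorem isCompact_mixedProfiles : IsCompact (mixedProfiles A) :=
  isCompact_univ_pi fun _ => isCompact_stdSimplex ℝ _

theorem convex_mixedProfiles : Convex ℝ (mixedProfiles A) :=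
  convex_pi fun _ _ => convex_stdSimplex ℝ _

theorem pure_mem_mixedProfiles [∀ i, DecidableEq (A i)] (a : ∀ i, A i) :
    (fun i => Pi.single (a i) 1) ∈ mixedProfiles A :=
  fun i _ => single_mem_stdSimplex ℝ (a i)

variable [Fintype N] {A} (E : N → N → Prop) [DecidableRel E] (r : ∀ i j, A i → A j → ℝ)

def actionPayoff (π : ∀ i, A i → ℝ) (i : N) (ai : A i) : ℝ :=
  ∑ j ∈ univ.filter (fun j => E i j), ∑ aj, r i j ai aj * π j aj

def payoff (π : ∀ i, A i → ℝ) (i : N) : ℝ :=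
  ∑ ai, π i ai * actionPayoff E r π i ai

def IsZeroSum : Prop :=
  ∀ π ∈ mixedProfiles A, ∑ i, payoff E r π i = 0

theorem sum_payoff_eq (π : ∀ i, A i → ℝ) :
    ∑ i, payoff E r π i = ∑ i, ∑ j ∈ univ.filter (fun j => E i j),
      ∑ ai, ∑ aj, π i ai * r i j ai aj * π j aj := by
  refine sum_congr rfl fun i _ => ?_
  simp only [payoff, actionPayoff, mul_sum, mul_assoc]
  exact sum_comm

def deviationForm : LinearMap.BilinForm ℝ (∀ i, A i → ℝ) :=
  LinearMap.mk₂ ℝ (fun σ π => ∑ i, ∑ ai, σ i ai * actionPayoff E r π i ai)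
    (fun σ σ' π => by simp only [Pi.add_apply, add_mul, sum_add_distrib])
    (fun c σ π => by simp only [Pi.smul_apply, smul_eq_mul, mul_assoc, mul_sum])
    (fun σ π π' => by simp only [actionPayoff, Pi.add_apply, mul_add, sum_add_distrib])
    (fun c σ π => by
      simp only [actionPayoff, Pi.smul_apply, smul_eq_mul, mul_sum, mul_left_comm])

theorem deviationForm_apply (σ π : ∀ i, A i → ℝ) :
    deviationForm E r σ π = ∑ i, ∑ ai, σ i ai * actionPayoff E r π i ai :=
  rfl

theorem deviationForm_self (π : ∀ i, A i → ℝ) :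
    deviationForm E r π π = ∑ i, payoff E r π i :=
  rfl

theorem deviationForm_pure [∀ i, DecidableEq (A i)] (a : ∀ i, A i) (π : ∀ i, A i → ℝ) :
    deviationForm E r (fun i => Pi.single (a i) 1) π = ∑ i, actionPayoff E r π i (a i) := by
  simp [deviationForm_apply, Pi.single_apply]

variable {E r}

theorem sum_nonneg_of_actionPayoff_le (hzs : IsZeroSum E r) {π : ∀ i, A i → ℝ}
    (hπ : π ∈ mixedProfiles A) {v : N → ℝ} (hv : ∀ i ai, actionPayoff E r π i ai ≤ v i) :
    0 ≤ ∑ i, v i :=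
  hzs π hπ ▸ sum_le_sum fun i _ => sum_mul_le_of_mem_stdSimplex (hπ i trivial) (hv i)

theorem le_payoff_add_of_sum_le (hzs : IsZeroSum E r) {π : ∀ i, A i → ℝ}
    (hπ : π ∈ mixedProfiles A) {v : N → ℝ} (hv : ∀ i ai, actionPayoff E r π i ai ≤ v i)
    {ε : ℝ} (hε : ∑ i, v i ≤ ε) (i : N) : v i ≤ payoff E r π i + ε := by
  have hgap : ∀ k, 0 ≤ v k - payoff E r π k := fun k =>
    sub_nonneg.2 (sum_mul_le_of_mem_stdSimplex (hπ k trivial) (hv k))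
  have := single_le_sum (fun k _ => hgap k) (mem_univ i)
  rw [sum_sub_distrib, hzs π hπ] at this
  linarith

theorem exists_actionPayoff_le_sum_eq_zero [∀ i, Nonempty (A i)] (hzs : IsZeroSum E r) :
    ∃ π ∈ mixedProfiles A, ∃ v : N → ℝ, (∀ i ai, actionPayoff E r π i ai ≤ v i) ∧
      ∑ i, v i = 0 := by
  classical
  obtain ⟨π, hπ, hnash⟩ := (deviationForm E r).exists_mem_forall_apply_nonpos
    ⟨_, pure_mem_mixedProfiles A fun _ => Classical.arbitrary _⟩ (convex_mixedProfiles A)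
    (isCompact_mixedProfiles A) fun π hπ => (deviationForm_self E r π ▸ hzs π hπ).le
  choose b hb using fun i => Finite.exists_max (actionPayoff E r π i)
  have hv : ∀ i ai, actionPayoff E r π i ai ≤ actionPayoff E r π i (b i) := hb
  refine ⟨π, hπ, _, hv, le_antisymm ?_ (sum_nonneg_of_actionPayoff_le hzs hπ hv)⟩
  exact deviationForm_pure E r b π ▸ hnash _ (pure_mem_mixedProfiles A b)

end Polymatrix

theorem zeroSum_polymatrix_LP_general {N : Type*} [Fintype N]
    (A : N → Type*) [∀ i, Fintype (A i)] [∀ i, Nonempty (A i)]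
    (E : N → N → Prop) [DecidableRel E]
    (r : ∀ i j, A i → A j → ℝ)
    (hzs : ∀ π : ∀ i, A i → ℝ, (∀ i a, 0 ≤ π i a) → (∀ i, ∑ a, π i a = 1) →
      ∑ i, ∑ j ∈ Finset.univ.filter (fun j => E i j),
        ∑ ai, ∑ aj, π i ai * r i j ai aj * π j aj = 0)
    (ε : ℝ) :
    -- (1) the LP has optimal value 0
    IsGLB {t : ℝ | ∃ (π : ∀ i, A i → ℝ) (v : N → ℝ),
        (∀ i a, 0 ≤ π i a) ∧ (∀ i, ∑ a, π i a = 1) ∧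
        (∀ i (ai : A i),
          (∑ j ∈ Finset.univ.filter (fun j => E i j), ∑ aj, r i j ai aj * π j aj) ≤ v i) ∧
        t = ∑ i, v i} 0 ∧
    -- (2) any ε-optimal feasible solution gives an ε-approximate NE with payoff estimates
    (∀ (π : ∀ i, A i → ℝ) (v : N → ℝ),
      (∀ i a, 0 ≤ π i a) → (∀ i, ∑ a, π i a = 1) →
      (∀ i (ai : A i),
        (∑ j ∈ Finset.univ.filter (fun j => E i j), ∑ aj, r i j ai aj * π j aj) ≤ v i) →
      (∑ i, v i ≤ ε) →
      ((∀ i (μ : A i → ℝ), (∀ a, 0 ≤ μ a) → (∑ a, μ a = 1) →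
          (∑ ai, μ ai * ∑ j ∈ Finset.univ.filter (fun j => E i j),
              ∑ aj, r i j ai aj * π j aj) -
          (∑ ai, π i ai * ∑ j ∈ Finset.univ.filter (fun j => E i j),
              ∑ aj, r i j ai aj * π j aj) ≤ ε) ∧
       (∀ i,
          (∑ ai, π i ai * ∑ j ∈ Finset.univ.filter (fun j => E i j),
              ∑ aj, r i j ai aj * π j aj) ≤ v i ∧
          v i ≤ (∑ ai, π i ai * ∑ j ∈ Finset.univ.filter (fun j => E i j),
              ∑ aj, r i j ai aj * π j aj) + ε))) := by
  open Polymatrix in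
  have hzs' : IsZeroSum E r := fun π hπ => by
    obtain ⟨h0, h1⟩ := (mem_mixedProfiles A).1 hπ
    exact (sum_payoff_eq E r π).trans (hzs π h0 h1)
  refine ⟨⟨?_, fun t ht => ?_⟩, fun π v h0 h1 hv hsum => ?_⟩
  · rintro t ⟨π, v, h0, h1, hv, rfl⟩
    exact sum_nonneg_of_actionPayoff_le hzs' ((mem_mixedProfiles A).2 ⟨h0, h1⟩) hv
  · obtain ⟨π, hπ, v, hv, hsum⟩ := exists_actionPayoff_le_sum_eq_zero hzs'
    obtain ⟨h0, h1⟩ := (mem_mixedProfiles A).1 hπ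
    exact ht ⟨π, v, h0, h1, hv, hsum.symm⟩
  · have hπ := (mem_mixedProfiles A).2 ⟨h0, h1⟩
    have hub := le_payoff_add_of_sum_le hzs' hπ hv hsum
    refine ⟨fun i μ hμ0 hμ1 => sub_le_iff_le_add'.2 ?_,
      fun i => ⟨sum_mul_le_of_mem_stdSimplex (hπ i trivial) (hv i), hub i⟩⟩
    exact (sum_mul_le_of_mem_stdSimplex ⟨hμ0, hμ1⟩ (hv i)).trans (hub i)

/-- For a zero-sum polymatrix game, the LP `min ∑ᵢ vᵢ s.t. vᵢ ≥ rᵢ(e_{aᵢ}, π₋ᵢ)` over product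
mixed strategies has optimal value `0`; moreover any ε-optimal feasible `(π*, v*)` yields an
ε-approximate Nash equilibrium `π*` with `rᵢ(π*) ≤ vᵢ* ≤ rᵢ(π*) + ε` for every player. -/
theorem zeroSum_polymatrix_LP {N : Type*} [Fintype N] [Nonempty N]
    (A : N → Type*) [∀ i, Fintype (A i)] [∀ i, Nonempty (A i)]
    (E : N → N → Prop) [DecidableRel E] (hirr : ∀ i, ¬ E i i)
    (r : ∀ i j, A i → A j → ℝ)
    (hzs : ∀ π : ∀ i, A i → ℝ, (∀ i a, 0 ≤ π i a) → (∀ i, ∑ a, π i a = 1) →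
      ∑ i, ∑ j ∈ Finset.univ.filter (fun j => E i j),
        ∑ ai, ∑ aj, π i ai * r i j ai aj * π j aj = 0)
    (ε : ℝ) (hε : 0 ≤ ε) :
    -- (1) the LP has optimal value 0
    IsGLB {t : ℝ | ∃ (π : ∀ i, A i → ℝ) (v : N → ℝ),
        (∀ i a, 0 ≤ π i a) ∧ (∀ i, ∑ a, π i a = 1) ∧
        (∀ i (ai : A i),
          (∑ j ∈ Finset.univ.filter (fun j => E i j), ∑ aj, r i j ai aj * π j aj) ≤ v i) ∧
        t = ∑ i, v i} 0 ∧
    -- (2) any ε-optimal feasible solution gives an ε-approximate NE with payoff estimates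
    (∀ (π : ∀ i, A i → ℝ) (v : N → ℝ),
      (∀ i a, 0 ≤ π i a) → (∀ i, ∑ a, π i a = 1) →
      (∀ i (ai : A i),
        (∑ j ∈ Finset.univ.filter (fun j => E i j), ∑ aj, r i j ai aj * π j aj) ≤ v i) →
      (∑ i, v i ≤ ε) →
      ((∀ i (μ : A i → ℝ), (∀ a, 0 ≤ μ a) → (∑ a, μ a = 1) →
          (∑ ai, μ ai * ∑ j ∈ Finset.univ.filter (fun j => E i j),
              ∑ aj, r i j ai aj * π j aj) -
          (∑ ai, π i ai * ∑ j ∈ Finset.univ.filter (fun j => E i j),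
              ∑ aj, r i j ai aj * π j aj) ≤ ε) ∧
       (∀ i,
          (∑ ai, π i ai * ∑ j ∈ Finset.univ.filter (fun j => E i j),
              ∑ aj, r i j ai aj * π j aj) ≤ v i ∧
          v i ≤ (∑ ai, π i ai * ∑ j ∈ Finset.univ.filter (fun j => E i j),
              ∑ aj, r i j ai aj * π j aj) + ε))) :=
  zeroSum_polymatrix_LP_general A E r hzs ε
end

section
/- Let P : S × A → Δ(S) be a transition kernel on a finite state space S with joint action space A = Π_{i∈N} A_i, and suppose P(s'|s, a) = Σ_{j∈C} F_j(s'|s, a_j) for nonnegative functions F_j depending only on player j's action, for some nonempty subset C of players. Then for each j ∈ C and each state s, the quantity w_j(s, a_j) := Σ_{s'} F_j(s'|s, a_j) is independent of a_j; consequently there exist weights w_j(s) ≥ 0 summing to 1 over j ∈ C and transition kernels P_j(·|s, a_j) ∈ Δ(S) such that P(·|s, a) = Σ_{j∈C} w_j(s) P_j(·|s, a_j). -/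
/-!
Fixing all actions but player `j`'s, the kernel condition `∑_{j ∈ C} ∑_{s'} F_j(s'|s,a_j) = 1`
shows that the mass `∑_{s'} F_j(s'|s,a_j)` does not depend on `a_j`. Taking these masses as the
weights `w_j(s)` and normalizing each `F_j(·|s,a_j)` by its mass gives the kernels `P_j`; where the
mass vanishes, `F_j` vanishes too, and any distribution (say the Dirac mass at `s`) will do.
-/

open Finset

theorem Finset.apply_eq_apply_of_forall_sum_eq {N M : Type*} [AddCancelCommMonoid M]
    {A : N → Type*} [∀ i, Nonempty (A i)] {C : Finset N} {g : ∀ j, A j → M} {c : M}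
    (h : ∀ a : ∀ i, A i, ∑ j ∈ C, g j (a j) = c) {j : N} (hj : j ∈ C) (b b' : A j) :
    g j b = g j b' := by
  classical
  let a₀ : ∀ i, A i := fun i => Classical.arbitrary (A i)
  have sum_update (v : A j) :
      ∑ k ∈ C, g k (Function.update a₀ j v k) = g j v + ∑ k ∈ C \ {j}, g k (a₀ k) := by
    simp only [Function.apply_update g, sum_update_of_mem hj]
  apply add_right_cancel (b := ∑ k ∈ C \ {j}, g k (a₀ k))
  rw [← sum_update, ← sum_update, h, h]

section Normalize

variable {S : Type*} [Fintype S] [DecidableEq S]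

noncomputable def normalizeOr (f : S → ℝ) (s₀ : S) : S → ℝ :=
  if ∑ x, f x = 0 then Pi.single s₀ 1 else (∑ x, f x)⁻¹ • f

theorem normalizeOr_nonneg {f : S → ℝ} (hf : 0 ≤ f) (s₀ : S) : 0 ≤ normalizeOr f s₀ := by
  unfold normalizeOr
  split_ifs
  · exact Pi.single_nonneg.mpr zero_le_one
  · exact smul_nonneg (inv_nonneg.mpr (sum_nonneg fun x _ => hf x)) hf

theorem sum_normalizeOr (f : S → ℝ) (s₀ : S) : ∑ x, normalizeOr f s₀ x = 1 := by
  unfold normalizeOr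
  split_ifs with h
  · simp
  · simp only [Pi.smul_apply, smul_eq_mul, ← mul_sum, inv_mul_cancel₀ h]

theorem sum_mul_normalizeOr {f : S → ℝ} (hf : 0 ≤ f) (s₀ x : S) :
    (∑ y, f y) * normalizeOr f s₀ x = f x := by
  unfold normalizeOr
  split_ifs with h
  · rw [h, zero_mul, (sum_eq_zero_iff_of_nonneg fun y _ => hf y).mp h x (mem_univ x)]
  · simp only [Pi.smul_apply, smul_eq_mul, mul_inv_cancel_left₀ h]

end Normalize

theorem ensemble_of_decomposable_kernel_general {S N : Type*} [Fintype S]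
    (A : N → Type*) [∀ i, Nonempty (A i)]
    (C : Finset N)
    (F : ∀ j, S → A j → S → ℝ)
    (hFnn : ∀ j ∈ C, ∀ (s : S) (aj : A j) (s' : S), 0 ≤ F j s aj s')
    (hker : ∀ (s : S) (a : ∀ i, A i), ∑ s', ∑ j ∈ C, F j s (a j) s' = 1) :
    (∀ j ∈ C, ∀ (s : S) (aj aj' : A j), ∑ s', F j s aj s' = ∑ s', F j s aj' s') ∧
    ∃ (w : N → S → ℝ) (Pk : ∀ j, S → A j → S → ℝ),
      (∀ j ∈ C, ∀ s, 0 ≤ w j s) ∧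
      (∀ s, ∑ j ∈ C, w j s = 1) ∧
      (∀ j ∈ C, ∀ (s : S) (aj : A j) (s' : S), 0 ≤ Pk j s aj s') ∧
      (∀ j ∈ C, ∀ (s : S) (aj : A j), ∑ s', Pk j s aj s' = 1) ∧
      (∀ (s : S) (a : ∀ i, A i) (s' : S),
        ∑ j ∈ C, F j s (a j) s' = ∑ j ∈ C, w j s * Pk j s (a j) s') := by
  classical
  have hmass (s : S) (a : ∀ i, A i) : ∑ j ∈ C, ∑ s', F j s (a j) s' = 1 := by
    rw [sum_comm]
    exact hker s a
  have hindep : ∀ j ∈ C, ∀ (s : S) (aj aj' : A j), ∑ s', F j s aj s' = ∑ s', F j s aj' s' :=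
    fun j hj s =>
      apply_eq_apply_of_forall_sum_eq (g := fun j aj => ∑ s', F j s aj s') (hmass s) hj
  let w (j : N) (s : S) : ℝ := ∑ s', F j s (Classical.arbitrary (A j)) s'
  refine ⟨hindep, w, fun j s aj => normalizeOr (F j s aj) s,
    fun j hj s => sum_nonneg fun s' _ => hFnn j hj s _ s',
    fun s => hmass s fun i => Classical.arbitrary (A i),
    fun j hj s aj => normalizeOr_nonneg (hFnn j hj s aj) s,
    fun j _ s aj => sum_normalizeOr _ s, fun s a s' => sum_congr rfl fun j hj => ?_⟩
  rw [show w j s = ∑ s', F j s (a j) s' from hindep j hj s _ _]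
  exact (sum_mul_normalizeOr (hFnn j hj s (a j)) s s').symm

/-- If a transition kernel decomposes as `P(s'|s,a) = ∑_{j∈C} F_j(s'|s,a_j)` with `F_j ≥ 0`,
then each `w_j(s,a_j) = ∑_{s'} F_j(s'|s,a_j)` is independent of `a_j`, and `P` is an ensemble
`P(·|s,a) = ∑_{j∈C} w_j(s) P_j(·|s,a_j)` of single-controller kernels, with weights
`w_j(s) ≥ 0` summing to 1 over `j ∈ C`. -/
theorem ensemble_of_decomposable_kernel {S N : Type*} [Fintype S] [Nonempty S]
    [Fintype N] [DecidableEq N]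
    (A : N → Type*) [∀ i, Fintype (A i)] [∀ i, Nonempty (A i)]
    (C : Finset N) (hC : C.Nonempty)
    (F : ∀ j, S → A j → S → ℝ)
    (hFnn : ∀ j ∈ C, ∀ (s : S) (aj : A j) (s' : S), 0 ≤ F j s aj s')
    (hker : ∀ (s : S) (a : ∀ i, A i), ∑ s', ∑ j ∈ C, F j s (a j) s' = 1) :
    (∀ j ∈ C, ∀ (s : S) (aj aj' : A j), ∑ s', F j s aj s' = ∑ s', F j s aj' s') ∧
    ∃ (w : N → S → ℝ) (Pk : ∀ j, S → A j → S → ℝ),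
      (∀ j ∈ C, ∀ s, 0 ≤ w j s) ∧
      (∀ s, ∑ j ∈ C, w j s = 1) ∧
      (∀ j ∈ C, ∀ (s : S) (aj : A j) (s' : S), 0 ≤ Pk j s aj s') ∧
      (∀ j ∈ C, ∀ (s : S) (aj : A j), ∑ s', Pk j s aj s' = 1) ∧
      (∀ (s : S) (a : ∀ i, A i) (s' : S),
        ∑ j ∈ C, F j s (a j) s' = ∑ j ∈ C, w j s * Pk j s (a j) s') :=
  ensemble_of_decomposable_kernel_general A C F hFnn hker
end

section
/- Given a finite-horizon Markov game with horizon H, if for each step h ∈ [H] and each state s an oracle outputs a per-state product policy π_h(s) that is an ε_{h,s}-approximate Nash equilibrium of the stage game with payoff matrices Q_{h,i,j}(s) (computed by exact backward induction with values V_{h+1,i} from π), then the resulting Markov policy π is a (Σ_{h∈[H]} max_{s∈S} ε_{h,s})-approximate Markov perfect Nash equilibrium of the Markov game, where approximation is measured by NE-Gap_h(M, π) = max_i max_s max_{π_i'} (V_{h,i}^{π_i', π_{-i}}(s) − V_{h,i}^π(s)). -/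
/-!
Performance-difference argument. Writing `W` for the value of a unilateral deviation of player `i`
and `V` for the value of `π`, one step of backward induction splits `W h s - V h s` into the
stage-game deviation gain at `(h, s)`, which the oracle bounds by `max_s ε h s`, plus an average
of `W (h+1) - V (h+1)` over the next state. Inducting down from `h = H` gives the bound
`∑_{h ≤ h' < H} max_s ε h' s`, and the missing terms `h' < h` are nonnegative because `π i h s`
itself is a feasible deviation with gain `0`.
-/

open Finset

theorem sum_mul_le_of_forall_le {α : Type*} [Fintype α] {w f : α → ℝ} {B : ℝ}
    (hw₀ : ∀ a, 0 ≤ w a) (hw₁ : ∑ a, w a = 1) (hf : ∀ a, f a ≤ B) :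
    ∑ a, w a * f a ≤ B :=
  calc ∑ a, w a * f a ≤ ∑ a, w a * B :=
        sum_le_sum fun a _ => mul_le_mul_of_nonneg_left (hf a) (hw₀ a)
    _ = B := by rw [← sum_mul, hw₁, one_mul]

section ProductPolicy

variable {N : Type*} [Fintype N] [DecidableEq N] {A : N → Type*}

theorem mul_prod_erase_eq_prod_update (p : ∀ j, A j → ℝ) (i : N) (μ : A i → ℝ)
    (a : ∀ j, A j) :
    μ (a i) * ∏ j ∈ univ.erase i, p j (a j) = ∏ j, Function.update p i μ j (a j) := by
  rw [← mul_prod_erase univ (fun j => Function.update p i μ j (a j)) (mem_univ i)]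
  refine congrArg₂ _ (by simp) (prod_congr rfl fun j hj => ?_)
  rw [Function.update_of_ne (ne_of_mem_erase hj)]

variable [∀ i, Fintype (A i)]

theorem sum_prod_eq_one_of_sum_eq_one (p : ∀ j, A j → ℝ) (hp : ∀ j, ∑ b, p j b = 1) :
    ∑ a : ∀ j, A j, ∏ j, p j (a j) = 1 := by
  rw [← Fintype.prod_sum, prod_eq_one fun j _ => hp j]

theorem sum_mul_prod_erase_eq_one (p : ∀ j, A j → ℝ) (hp : ∀ j, ∑ b, p j b = 1) (i : N)
    (μ : A i → ℝ) (hμ : ∑ b, μ b = 1) :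
    ∑ a : ∀ j, A j, μ (a i) * ∏ j ∈ univ.erase i, p j (a j) = 1 := by
  simp_rw [mul_prod_erase_eq_prod_update]
  refine sum_prod_eq_one_of_sum_eq_one _ fun j => ?_
  rcases eq_or_ne j i with rfl | hj
  · simpa using hμ
  · simpa [Function.update_of_ne hj] using hp j

end ProductPolicy

theorem deviation_gain_le_add_of_stage_gap_le {α S : Type*} [Fintype α] [Fintype S]
    {w r Q : α → ℝ} {P : α → S → ℝ} {W' V' : S → ℝ} {V e B : ℝ}
    (hw₀ : ∀ a, 0 ≤ w a) (hw₁ : ∑ a, w a = 1)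
    (hP₀ : ∀ a s', 0 ≤ P a s') (hP₁ : ∀ a, ∑ s', P a s' = 1)
    (hQ : ∀ a, Q a = r a + ∑ s', P a s' * V' s')
    (hstage : ∑ a, w a * Q a - V ≤ e) (hnext : ∀ s', W' s' - V' s' ≤ B) :
    ∑ a, w a * (r a + ∑ s', P a s' * W' s') - V ≤ e + B := by
  have hsplit : ∑ a, w a * (r a + ∑ s', P a s' * W' s') - V =
      (∑ a, w a * Q a - V) + ∑ a, w a * ∑ s', P a s' * (W' s' - V' s') := by
    simp only [hQ, mul_sub, sum_sub_distrib, mul_add, sum_add_distrib]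
    ring
  have hfuture : ∑ a, w a * ∑ s', P a s' * (W' s' - V' s') ≤ B :=
    sum_mul_le_of_forall_le hw₀ hw₁ fun a => sum_mul_le_of_forall_le (hP₀ a) (hP₁ a) hnext
  linarith

theorem approx_stage_NE_gives_approx_Markov_NE_general {S N : Type*}
    [Fintype S] [Nonempty S] [Fintype N] [DecidableEq N]
    (A : N → Type*) [∀ i, Fintype (A i)]
    (H : ℕ)
    (P : ℕ → S → (∀ i, A i) → S → ℝ)
    (hPnn : ∀ h, h < H → ∀ s a s', 0 ≤ P h s a s')
    (hPsum : ∀ h, h < H → ∀ s a, ∑ s', P h s a s' = 1)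
    (r : ℕ → N → S → (∀ i, A i) → ℝ)
    -- the Markov product policy produced by the oracle
    (π : ∀ i : N, ℕ → S → A i → ℝ)
    (hπnn : ∀ i h s a, 0 ≤ π i h s a) (hπsum : ∀ i h s, ∑ a, π i h s a = 1)
    (ε : ℕ → S → ℝ)
    -- backward induction values and Q-functions under π
    (V : ℕ → N → S → ℝ) (Q : ℕ → N → S → (∀ i, A i) → ℝ)
    (hVend : ∀ i s, V H i s = 0)
    (hQ : ∀ h, h < H → ∀ i s a,
      Q h i s a = r h i s a + ∑ s', P h s a s' * V (h + 1) i s')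
    (hV : ∀ h, h < H → ∀ i s,
      V h i s = ∑ a : ∀ j, A j, (∏ j, π j h s (a j)) * Q h i s a)
    -- the oracle guarantee: π h s is an (ε h s)-approximate NE of the stage game Q h · s
    (hstage : ∀ h, h < H → ∀ (s : S) (i : N) (μ : A i → ℝ),
      (∀ b, 0 ≤ μ b) → (∑ b, μ b = 1) →
      (∑ a : ∀ j, A j, (μ (a i) * ∏ j ∈ Finset.univ.erase i, π j h s (a j)) * Q h i s a)
        - V h i s ≤ ε h s) :
    -- conclusion: the NE-Gap at every step is at most ∑_{h∈[H]} max_s ε h s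
    ∀ (i : N) (μ : ℕ → S → A i → ℝ),
      (∀ h s b, 0 ≤ μ h s b) → (∀ h s, ∑ b, μ h s b = 1) →
      ∀ W : ℕ → S → ℝ, (∀ s, W H s = 0) →
        (∀ h, h < H → ∀ s, W h s = ∑ a : ∀ j, A j,
            (μ h s (a i) * ∏ j ∈ Finset.univ.erase i, π j h s (a j)) *
            (r h i s a + ∑ s', P h s a s' * W (h + 1) s')) →
      ∀ h, h ≤ H → ∀ s : S,
        W h s - V h i s ≤
          ∑ h' ∈ Finset.range H, Finset.univ.sup' Finset.univ_nonempty (ε h') := by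
  intro i μ hμ₀ hμ₁ W hWH hW h hhH s
  set M : ℕ → ℝ := fun h' => univ.sup' univ_nonempty (ε h')
  have hM₀ : ∀ h' < H, 0 ≤ M h' := fun h' hh' => by
    obtain ⟨s⟩ := ‹Nonempty S›
    have hπ_gain := hstage h' hh' s i (π i h' s) (hπnn i h' s) (hπsum i h' s)
    simp only [mul_prod_erase univ (fun j => π j h' s _) (mem_univ i), ← hV h' hh',
      sub_self] at hπ_gain
    exact hπ_gain.trans (le_sup' (ε h') (mem_univ s))
  have hgap : ∀ h ≤ H, ∀ s, W h s - V h i s ≤ ∑ h' ∈ Ico h H, M h' := by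
    intro h hh
    induction hh using Nat.decreasingInduction with
    | self => simp [hWH, hVend]
    | of_succ h hh ih =>
      intro s
      rw [sum_eq_sum_Ico_succ_bot hh, hW h hh s]
      exact deviation_gain_le_add_of_stage_gap_le
        (fun a => mul_nonneg (hμ₀ h s (a i)) (prod_nonneg fun j _ => hπnn j h s (a j)))
        (sum_mul_prod_erase_eq_one _ (hπsum · h s) i _ (hμ₁ h s)) (hPnn h hh s) (hPsum h hh s)
        (hQ h hh i s) ((hstage h hh s i _ (hμ₀ h s) (hμ₁ h s)).trans (le_sup' _ (mem_univ s))) ih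
  calc W h s - V h i s ≤ ∑ h' ∈ Ico h H, M h' := hgap h hhH s
    _ ≤ ∑ h' ∈ range H, M h' := by
      rw [range_eq_Ico]
      exact sum_le_sum_of_subset_of_nonneg (Ico_subset_Ico_left (Nat.zero_le h))
        fun h' hh' _ => hM₀ h' (mem_Ico.1 hh').2

/-- Value iteration with approximate stage-game NE oracles in a finite-horizon Markov game:
if at every step `h < H` and state `s` the per-state product policy `π h s` is an
`ε h s`-approximate NE of the stage game with payoffs `Q h i s` (computed by exact backward
induction), then for every player `i`, every deviation Markov policy `μ`, and every step
`h ≤ H`, the deviation gain is at most `∑_{h' < H} max_s ε h' s`. -/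
theorem approx_stage_NE_gives_approx_Markov_NE {S N : Type*}
    [Fintype S] [Nonempty S] [Fintype N] [DecidableEq N]
    (A : N → Type*) [∀ i, Fintype (A i)] [∀ i, Nonempty (A i)]
    (H : ℕ)
    (P : ℕ → S → (∀ i, A i) → S → ℝ)
    (hPnn : ∀ h, h < H → ∀ s a s', 0 ≤ P h s a s')
    (hPsum : ∀ h, h < H → ∀ s a, ∑ s', P h s a s' = 1)
    (r : ℕ → N → S → (∀ i, A i) → ℝ)
    -- the Markov product policy produced by the oracle
    (π : ∀ i : N, ℕ → S → A i → ℝ)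
    (hπnn : ∀ i h s a, 0 ≤ π i h s a) (hπsum : ∀ i h s, ∑ a, π i h s a = 1)
    (ε : ℕ → S → ℝ)
    -- backward induction values and Q-functions under π
    (V : ℕ → N → S → ℝ) (Q : ℕ → N → S → (∀ i, A i) → ℝ)
    (hVend : ∀ i s, V H i s = 0)
    (hQ : ∀ h, h < H → ∀ i s a,
      Q h i s a = r h i s a + ∑ s', P h s a s' * V (h + 1) i s')
    (hV : ∀ h, h < H → ∀ i s,
      V h i s = ∑ a : ∀ j, A j, (∏ j, π j h s (a j)) * Q h i s a)
    -- the oracle guarantee: π h s is an (ε h s)-approximate NE of the stage game Q h · s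
    (hstage : ∀ h, h < H → ∀ (s : S) (i : N) (μ : A i → ℝ),
      (∀ b, 0 ≤ μ b) → (∑ b, μ b = 1) →
      (∑ a : ∀ j, A j, (μ (a i) * ∏ j ∈ Finset.univ.erase i, π j h s (a j)) * Q h i s a)
        - V h i s ≤ ε h s) :
    -- conclusion: the NE-Gap at every step is at most ∑_{h∈[H]} max_s ε h s
    ∀ (i : N) (μ : ℕ → S → A i → ℝ),
      (∀ h s b, 0 ≤ μ h s b) → (∀ h s, ∑ b, μ h s b = 1) →
      ∀ W : ℕ → S → ℝ, (∀ s, W H s = 0) →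
        (∀ h, h < H → ∀ s, W h s = ∑ a : ∀ j, A j,
            (μ h s (a i) * ∏ j ∈ Finset.univ.erase i, π j h s (a j)) *
            (r h i s a + ∑ s', P h s a s' * W (h + 1) s')) →
      ∀ h, h ≤ H → ∀ s : S,
        W h s - V h i s ≤
          ∑ h' ∈ Finset.range H, Finset.univ.sup' Finset.univ_nonempty (ε h') :=
  approx_stage_NE_gives_approx_Markov_NE_general A H P hPnn hPsum r π hπnn hπsum ε V Q hVend hQ hV
    hstage
end

section
/- Let (y_k)_{k≥0} be a bounded sequence in R^d satisfying, coordinate-wise, y_{k+1}[n] ≤ (1−β_{n,k}) y_k[n] + β_{n,k}(γ‖y_k‖_∞ + ε̄_k) and y_{k+1}[n] ≥ (1−β_{n,k}) y_k[n] + β_{n,k}(−γ‖y_k‖_∞ + ε_k), where γ ∈ (0,1), β_{n,k} ∈ (0,1] with Σ_k β_{n,k} = ∞ and β_{n,k} → 0 for each n, and limsup_k |ε̄_k| ≤ c, limsup_k |ε_k| ≤ c. Then limsup_{k→∞} ‖y_k‖_∞ ≤ c/(1−γ). -/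
/-!
Write `S k = ‖y k‖_∞` and `L = limsup S`. For `δ > 0`, eventually `S k ≤ L + δ` and both errors are
within `c + δ`, so the two recursions squeeze each coordinate: `|y (k+1) n|` is at most the convex
combination `(1 - β) |y k n| + β a` with `a = γ (L + δ) + c + δ`. Since `∏ (1 - β) ≤ exp (-∑ β) → 0`,
such a recursion forgets its initial value, so eventually `S k ≤ a + δ`. Hence
`L ≤ γ L + c + O(δ)` for every `δ > 0`, i.e. `(1 - γ) L ≤ c`.
-/

open Filter Finset Real

lemma abs_le_one_sub_mul_abs_add_mul {x x' b p q a : ℝ} (hb0 : 0 ≤ b) (hb1 : b ≤ 1)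
    (hup : x' ≤ (1 - b) * x + b * p) (hlo : (1 - b) * x + b * q ≤ x')
    (hp : p ≤ a) (hq : -a ≤ q) :
    |x'| ≤ (1 - b) * |x| + b * a := by
  have h1b : 0 ≤ 1 - b := by linarith
  rw [abs_le]
  constructor
  · nlinarith [neg_abs_le x, mul_le_mul_of_nonneg_left (neg_abs_le x) h1b]
  · nlinarith [le_abs_self x, mul_le_mul_of_nonneg_left (le_abs_self x) h1b]

lemma le_mul_exp_neg_sum_Ico {w b : ℕ → ℝ} {K : ℕ} (hw : ∀ k, 0 ≤ w k)
    (hrec : ∀ k ≥ K, w (k + 1) ≤ (1 - b k) * w k) {k : ℕ} (hk : K ≤ k) :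
    w k ≤ w K * exp (-∑ j ∈ Ico K k, b j) := by
  induction k, hk using Nat.le_induction with
  | base => simp
  | succ k hk ih =>
    calc w (k + 1) ≤ (1 - b k) * w k := hrec k hk
      _ ≤ exp (-b k) * w k := by
        gcongr
        · exact hw k
        · linarith [add_one_le_exp (-b k)]
      _ ≤ exp (-b k) * (w K * exp (-∑ j ∈ Ico K k, b j)) := by gcongr
      _ = w K * exp (-∑ j ∈ Ico K (k + 1), b j) := by
        rw [sum_Ico_succ_top hk, neg_add, exp_add]
        ring

lemma tendsto_sum_Ico_atTop {b : ℕ → ℝ} (K : ℕ)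
    (hsum : Tendsto (fun k => ∑ j ∈ range k, b j) atTop atTop) :
    Tendsto (fun k => ∑ j ∈ Ico K k, b j) atTop atTop := by
  refine (tendsto_atTop_add_const_right atTop (-∑ j ∈ range K, b j) hsum).congr' ?_
  filter_upwards [eventually_ge_atTop K] with k hk
  rw [sum_Ico_eq_sub _ hk, sub_eq_add_neg]

lemma eventually_le_add_of_le_one_sub_mul_add {u b : ℕ → ℝ} {a δ : ℝ} (hδ : 0 < δ)
    (hb : ∀ k, b k ≤ 1) (hsum : Tendsto (fun k => ∑ j ∈ range k, b j) atTop atTop)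
    (hrec : ∀ᶠ k in atTop, u (k + 1) ≤ (1 - b k) * u k + b k * a) :
    ∀ᶠ k in atTop, u k ≤ a + δ := by
  obtain ⟨K, hK⟩ := eventually_atTop.1 hrec
  set w : ℕ → ℝ := fun k => max (u k - a) 0
  have hw_rec : ∀ k ≥ K, w (k + 1) ≤ (1 - b k) * w k := by
    intro k hk
    have h1b : 0 ≤ 1 - b k := by linarith [hb k]
    have hle : (1 - b k) * (u k - a) ≤ (1 - b k) * w k :=
      mul_le_mul_of_nonneg_left (le_max_left _ _) h1b
    refine max_le ?_ (mul_nonneg h1b (le_max_right _ _))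
    linarith [hK k hk]
  have hlim : Tendsto (fun k => w K * exp (-∑ j ∈ Ico K k, b j)) atTop (nhds 0) := by
    simpa using ((tendsto_exp_atBot.comp
      (tendsto_neg_atTop_atBot.comp (tendsto_sum_Ico_atTop K hsum))).const_mul (w K))
  filter_upwards [hlim.eventually_lt_const hδ, eventually_ge_atTop K] with k hsmall hk
  have := le_mul_exp_neg_sum_Ico (w := w) (fun k => le_max_right _ _) hw_rec hk
  linarith [le_max_left (u k - a) 0]

theorem stochastic_approximation_contraction_general {ι : Type*} [Fintype ι] [Nonempty ι]
    (y : ℕ → ι → ℝ) (β : ι → ℕ → ℝ) (γ c : ℝ) (ebar eund : ℕ → ℝ)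
    (hγ0 : 0 < γ) (hγ1 : γ < 1)
    (hβmem : ∀ n k, β n k ∈ Set.Ioc (0 : ℝ) 1)
    (hβsum : ∀ n, Tendsto (fun K => ∑ k ∈ Finset.range K, β n k) atTop atTop)
    (hebar : ∀ δ > (0:ℝ), ∀ᶠ k in atTop, |ebar k| ≤ c + δ)
    (heund : ∀ δ > (0:ℝ), ∀ᶠ k in atTop, |eund k| ≤ c + δ)
    (hbdd : ∃ M : ℝ, ∀ k n, |y k n| ≤ M)
    (hub : ∀ k n, y (k + 1) n ≤ (1 - β n k) * y k n +
      β n k * (γ * Finset.univ.sup' Finset.univ_nonempty (fun m => |y k m|) + ebar k))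
    (hlb : ∀ k n, (1 - β n k) * y k n +
      β n k * (-(γ * Finset.univ.sup' Finset.univ_nonempty (fun m => |y k m|)) + eund k) ≤
      y (k + 1) n) :
    Filter.limsup
      (fun k => Finset.univ.sup' Finset.univ_nonempty (fun m => |y k m|)) atTop ≤
      c / (1 - γ) := by
  obtain ⟨M, hM⟩ := hbdd
  set S : ℕ → ℝ := fun k => univ.sup' univ_nonempty (fun m => |y k m|)
  set L := limsup S atTop
  have hS_bdd : IsBoundedUnder (· ≤ ·) atTop S :=
    isBoundedUnder_of ⟨M, fun k => sup'_le _ _ fun n _ => hM k n⟩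
  have hS_cobdd : IsCoboundedUnder (· ≤ ·) atTop S := IsBoundedUnder.isCoboundedUnder_le
    (isBoundedUnder_of ⟨0, fun k => le_sup'_of_le _ (mem_univ (Classical.arbitrary ι))
      (abs_nonneg _)⟩)
  have key : ∀ δ > 0, L ≤ γ * (L + δ) + c + 2 * δ := by
    intro δ hδ
    have hcoord : ∀ n, ∀ᶠ k in atTop, |y k n| ≤ γ * (L + δ) + c + δ + δ := fun n =>
      eventually_le_add_of_le_one_sub_mul_add hδ (fun k => (hβmem n k).2) (hβsum n) (by
        filter_upwards [eventually_lt_of_limsup_lt (lt_add_of_pos_right L hδ) hS_bdd,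
          hebar δ hδ, heund δ hδ] with k hS he he'
        have hγS : γ * S k ≤ γ * (L + δ) := mul_le_mul_of_nonneg_left hS.le hγ0.le
        exact abs_le_one_sub_mul_abs_add_mul (hβmem n k).1.le (hβmem n k).2 (hub k n) (hlb k n)
          (by linarith [le_abs_self (ebar k)]) (by linarith [neg_abs_le (eund k)]))
    refine limsup_le_of_le hS_cobdd ?_
    filter_upwards [eventually_all.2 hcoord] with k hk
    exact (sup'_le _ _ fun n _ => hk n).trans_eq (by ring)
  have hL : L ≤ γ * L + c := le_of_forall_pos_le_add fun ε hε => by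
    nlinarith [key (ε / 3) (by positivity)]
  rw [le_div_iff₀ (by linarith)]
  linarith

/-- Deterministic stochastic-approximation lemma: if a bounded sequence `(y_k)` satisfies the
coordinate-wise sandwich recursions with contraction factor `γ ∈ (0,1)`, step sizes
`β_{n,k} ∈ (0,1]` with `∑_k β_{n,k} = ∞`, `β_{n,k} → 0`, and error sequences whose limsups of
absolute values are at most `c`, then `limsup_k ‖y_k‖_∞ ≤ c/(1−γ)`. -/
theorem stochastic_approximation_contraction {ι : Type*} [Fintype ι] [Nonempty ι]
    (y : ℕ → ι → ℝ) (β : ι → ℕ → ℝ) (γ c : ℝ) (ebar eund : ℕ → ℝ)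
    (hγ0 : 0 < γ) (hγ1 : γ < 1) (hc : 0 ≤ c)
    (hβmem : ∀ n k, β n k ∈ Set.Ioc (0 : ℝ) 1)
    (hβsum : ∀ n, Tendsto (fun K => ∑ k ∈ Finset.range K, β n k) atTop atTop)
    (hβ0 : ∀ n, Tendsto (β n) atTop (nhds 0))
    (hebar : ∀ δ > (0:ℝ), ∀ᶠ k in atTop, |ebar k| ≤ c + δ)
    (heund : ∀ δ > (0:ℝ), ∀ᶠ k in atTop, |eund k| ≤ c + δ)
    (hbdd : ∃ M : ℝ, ∀ k n, |y k n| ≤ M)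
    (hub : ∀ k n, y (k + 1) n ≤ (1 - β n k) * y k n +
      β n k * (γ * Finset.univ.sup' Finset.univ_nonempty (fun m => |y k m|) + ebar k))
    (hlb : ∀ k n, (1 - β n k) * y k n +
      β n k * (-(γ * Finset.univ.sup' Finset.univ_nonempty (fun m => |y k m|)) + eund k) ≤
      y (k + 1) n) :
    Filter.limsup
      (fun k => Finset.univ.sup' Finset.univ_nonempty (fun m => |y k m|)) atTop ≤
      c / (1 - γ) :=
  stochastic_approximation_contraction_general y β γ c ebar eund hγ0 hγ1 hβmem hβsum hebar heund
    hbdd hub hlb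
end

section
/- Define the Shapley-type operator T_1 on Q-functions Q_1 : S → R^{|A_1| × Σ_{i≠1}|A_i|} (viewed as tuples (Q_{1,i}(s))_{i≠1}) by (T_1 Q_1)(s, a_1, a_i) = r_{1,i}(s, a_1, a_i) + γ Σ_{s'} (1/(n−1)) P_1(s'|s, a_1) · Val_1(Q_1(s')), where Val_1(Q_1(s)) = max_{μ_1∈Δ(A_1)} min_{(μ_i)_{i≠1}} Σ_{i≠1} μ_1^T Q_{1,i}(s) μ_i. Then T_1 is a γ-contraction with respect to the norm ‖Q‖ = max_{s∈S} Σ_{i≠1} ‖Q_{1,i}(s)‖_max, where ‖·‖_max is the entrywise max-absolute-value norm. -/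
/-! Mixed strategies are probability vectors, so every payoff `∑_i μᵀ Q_{1,i} ρ_i` moves by at
most `∑_i ‖Q_{1,i} - Q'_{1,i}‖_max` when `Q` is replaced by `Q'`; a sup–inf of such payoffs moves
by no more, so `Val₁` is 1-Lipschitz. Each entry of `T₁Q - T₁Q'` is `γ/(n-1)` times a
`P₁`-average of differences of values, and summing over the `n - 1` opponents cancels the
factor `1/(n-1)`. -/

/-- The max-min value of a star-shaped polymatrix stage game:
`Val₁(Q) = max_{μ₁ ∈ Δ(B)} min_{(ρ_i)_i ∈ Π_i Δ(A_i)} ∑_i μ₁ᵀ Q_{1,i} ρ_i`. -/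
noncomputable def polyVal {B I : Type*} [Fintype B] [Fintype I]
    (A : I → Type*) [∀ i, Fintype (A i)]
    (Q : ∀ i, B → A i → ℝ) : ℝ :=
  ⨆ μ : {p : B → ℝ // p ∈ stdSimplex ℝ B},
    ⨅ ρ : ∀ i, {p : A i → ℝ // p ∈ stdSimplex ℝ (A i)},
      ∑ i, ∑ b, ∑ a, μ.1 b * Q i b a * (ρ i).1 a

/-- The norm `‖Q‖ = max_{s∈S} ∑_{i≠1} ‖Q_{1,i}(s)‖_max` on Q-functions. -/
noncomputable def qNorm {S B I : Type*} [Fintype S] [Nonempty S] [Fintype B] [Fintype I]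
    (A : I → Type*) [∀ i, Fintype (A i)]
    (Q : S → ∀ i, B → A i → ℝ) : ℝ :=
  ⨆ s : S, ∑ i, ⨆ b, ⨆ a, |Q s i b a|

/-- The Shapley-type operator
`(T₁ Q)(s, a₁, a_i) = r_{1,i}(s,a₁,a_i) + γ ∑_{s'} (1/(n−1)) P₁(s'|s,a₁) · Val₁(Q(s'))`. -/
noncomputable def shapleyT {S B I : Type*} [Fintype S] [Fintype B] [Fintype I]
    (A : I → Type*) [∀ i, Fintype (A i)]
    (γ : ℝ) (P1 : S → B → S → ℝ) (rwd : ∀ i : I, S → B → A i → ℝ)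
    (Q : S → ∀ i, B → A i → ℝ) : S → ∀ i, B → A i → ℝ :=
  fun s i b a => rwd i s b a +
    γ * ∑ s', (1 / (Fintype.card I : ℝ)) * P1 s b s' * polyVal A (Q s')

open Finset Set

lemma abs_sum_mul_le_norm_of_mem_stdSimplex {ι : Type*} [Fintype ι] {w : ι → ℝ}
    (hw : w ∈ stdSimplex ℝ ι) (v : ι → ℝ) : |∑ i, w i * v i| ≤ ‖v‖ :=
  calc |∑ i, w i * v i| ≤ ∑ i, w i * |v i| := by
        refine (abs_sum_le_sum_abs _ _).trans_eq (sum_congr rfl fun i _ => ?_)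
        rw [abs_mul, abs_of_nonneg (hw.1 i)]
    _ ≤ ∑ i, w i * ‖v‖ :=
        sum_le_sum fun i _ => mul_le_mul_of_nonneg_left (norm_le_pi_norm v i) (hw.1 i)
    _ = ‖v‖ := by rw [← sum_mul, hw.2, one_mul]

lemma abs_bilinear_le_norm_of_mem_stdSimplex {B A : Type*} [Fintype B] [Fintype A]
    {μ : B → ℝ} (hμ : μ ∈ stdSimplex ℝ B) {ρ : A → ℝ} (hρ : ρ ∈ stdSimplex ℝ A)
    (X : B → A → ℝ) : |∑ b, ∑ a, μ b * X b a * ρ a| ≤ ‖X‖ := by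
  have hrows : ‖fun b => ∑ a, ρ a * X b a‖ ≤ ‖X‖ :=
    (pi_norm_le_iff_of_nonneg (norm_nonneg X)).2 fun b =>
      (abs_sum_mul_le_norm_of_mem_stdSimplex hρ (X b)).trans (norm_le_pi_norm X b)
  calc |∑ b, ∑ a, μ b * X b a * ρ a| = |∑ b, μ b * ∑ a, ρ a * X b a| := by
        simp only [mul_sum]
        congr 1
        exact sum_congr rfl fun b _ => sum_congr rfl fun a _ => by ring
    _ ≤ ‖X‖ := (abs_sum_mul_le_norm_of_mem_stdSimplex hμ _).trans hrows

section SupInf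

variable {ι κ : Type*} [Nonempty ι] [Nonempty κ] {f g : ι → κ → ℝ} {K c : ℝ}

lemma ciSup_ciInf_le_ciSup_ciInf_add (hf : ∀ x y, |f x y| ≤ K) (hg : ∀ x y, |g x y| ≤ K)
    (h : ∀ x y, g x y ≤ f x y + c) : ⨆ x, ⨅ y, g x y ≤ (⨆ x, ⨅ y, f x y) + c := by
  have hbdd : ∀ u : ι → κ → ℝ, (∀ x y, |u x y| ≤ K) → ∀ x, BddBelow (range (u x)) :=
    fun u hu x => ⟨-K, forall_mem_range.2 fun y => (abs_le.1 (hu x y)).1⟩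
  have hf_sup : BddAbove (range fun x => ⨅ y, f x y) :=
    ⟨K, forall_mem_range.2 fun x =>
      (ciInf_le (hbdd f hf x) (Classical.arbitrary κ)).trans (abs_le.1 (hf x _)).2⟩
  refine ciSup_le fun x => ?_
  calc ⨅ y, g x y ≤ (⨅ y, f x y) + c :=
        le_ciInf_add fun y => (ciInf_le (hbdd g hg x) y).trans (h x y)
    _ ≤ (⨆ x, ⨅ y, f x y) + c := by gcongr; exact le_ciSup hf_sup x

lemma abs_ciSup_ciInf_sub_le (hf : ∀ x y, |f x y| ≤ K) (hg : ∀ x y, |g x y| ≤ K)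
    (h : ∀ x y, |f x y - g x y| ≤ c) :
    |(⨆ x, ⨅ y, f x y) - ⨆ x, ⨅ y, g x y| ≤ c := by
  have hfg := ciSup_ciInf_le_ciSup_ciInf_add hg hf fun x y => by
    linarith [(abs_le.1 (h x y)).2]
  have hgf := ciSup_ciInf_le_ciSup_ciInf_add hf hg fun x y => by
    linarith [(abs_le.1 (h x y)).1]
  exact abs_sub_le_iff.2 ⟨by linarith, by linarith⟩

end SupInf

section Val

variable {B I : Type*} [Fintype B] [Fintype I] (A : I → Type*) [∀ i, Fintype (A i)]

def polyPayoff (Q : ∀ i, B → A i → ℝ) (μ : B → ℝ) (ρ : ∀ i, A i → ℝ) : ℝ :=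
  ∑ i, ∑ b, ∑ a, μ b * Q i b a * ρ i a

lemma polyPayoff_sub (Q Q' : ∀ i, B → A i → ℝ) (μ : B → ℝ) (ρ : ∀ i, A i → ℝ) :
    polyPayoff A (Q - Q') μ ρ = polyPayoff A Q μ ρ - polyPayoff A Q' μ ρ := by
  simp only [polyPayoff, Pi.sub_apply, mul_sub, sub_mul, sum_sub_distrib]

lemma abs_polyPayoff_le (X : ∀ i, B → A i → ℝ) {μ : B → ℝ} (hμ : μ ∈ stdSimplex ℝ B)
    {ρ : ∀ i, A i → ℝ} (hρ : ∀ i, ρ i ∈ stdSimplex ℝ (A i)) :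
    |polyPayoff A X μ ρ| ≤ ∑ i, ‖X i‖ :=
  (abs_sum_le_sum_abs _ _).trans <| sum_le_sum fun i _ =>
    abs_bilinear_le_norm_of_mem_stdSimplex hμ (hρ i) (X i)

lemma polyVal_eq_ciSup_ciInf_polyPayoff (Q : ∀ i, B → A i → ℝ) :
    polyVal A Q = ⨆ μ : {p : B → ℝ // p ∈ stdSimplex ℝ B},
      ⨅ ρ : ∀ i, {p : A i → ℝ // p ∈ stdSimplex ℝ (A i)}, polyPayoff A Q μ.1 fun i => (ρ i).1 :=
  rfl

lemma abs_polyVal_sub_le [Nonempty B] [∀ i, Nonempty (A i)] (Q Q' : ∀ i, B → A i → ℝ) :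
    |polyVal A Q - polyVal A Q'| ≤ ∑ i, ‖Q i - Q' i‖ := by
  have hK : ∀ X : ∀ i, B → A i → ℝ, 0 ≤ ∑ i, ‖X i‖ :=
    fun X => sum_nonneg fun _ _ => norm_nonneg _
  rw [polyVal_eq_ciSup_ciInf_polyPayoff, polyVal_eq_ciSup_ciInf_polyPayoff]
  refine abs_ciSup_ciInf_sub_le (K := ∑ i, ‖Q i‖ + ∑ i, ‖Q' i‖)
    (fun μ ρ => ?_) (fun μ ρ => ?_) fun μ ρ => ?_
  · exact (abs_polyPayoff_le A Q μ.2 fun i => (ρ i).2).trans (le_add_of_nonneg_right (hK Q'))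
  · exact (abs_polyPayoff_le A Q' μ.2 fun i => (ρ i).2).trans (le_add_of_nonneg_left (hK Q))
  · rw [← polyPayoff_sub]
    exact abs_polyPayoff_le A _ μ.2 fun i => (ρ i).2

end Val

lemma iSup_iSup_abs_eq_norm {B A : Type*} [Fintype B] [Fintype A] (X : B → A → ℝ) :
    ⨆ b, ⨆ a, |X b a| = ‖X‖ := by
  have hnonneg : 0 ≤ ⨆ b, ⨆ a, |X b a| :=
    Real.iSup_nonneg fun _ => Real.iSup_nonneg fun _ => abs_nonneg _
  refine le_antisymm
    (Real.iSup_le (fun b => Real.iSup_le (fun a => ?_) (norm_nonneg _)) (norm_nonneg _))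
    ((pi_norm_le_iff_of_nonneg hnonneg).2 fun b => (pi_norm_le_iff_of_nonneg hnonneg).2 fun a => ?_)
  · exact (norm_le_pi_norm (X b) a).trans (norm_le_pi_norm X b)
  · exact (le_ciSup (Finite.bddAbove (finite_range _)) a).trans
      (le_ciSup (f := fun b => ⨆ a, |X b a|) (Finite.bddAbove (finite_range _)) b)

section QNorm

variable {S B I : Type*} [Fintype S] [Nonempty S] [Fintype B] [Fintype I]
  (A : I → Type*) [∀ i, Fintype (A i)] (Q : S → ∀ i, B → A i → ℝ)

lemma qNorm_eq_iSup_sum_norm : qNorm A Q = ⨆ s, ∑ i, ‖Q s i‖ := by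
  simp only [qNorm, iSup_iSup_abs_eq_norm]

lemma sum_norm_le_qNorm (s : S) : ∑ i, ‖Q s i‖ ≤ qNorm A Q := by
  rw [qNorm_eq_iSup_sum_norm]
  exact le_ciSup (f := fun s => ∑ i, ‖Q s i‖) (Finite.bddAbove (finite_range _)) s

lemma qNorm_nonneg : 0 ≤ qNorm A Q :=
  (sum_nonneg fun _ _ => norm_nonneg _).trans (sum_norm_le_qNorm A Q (Classical.arbitrary S))

end QNorm

lemma shapleyT_sub_shapleyT {S B I : Type*} [Fintype S] [Fintype B] [Fintype I]
    (A : I → Type*) [∀ i, Fintype (A i)] (γ : ℝ) (P1 : S → B → S → ℝ)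
    (rwd : ∀ i : I, S → B → A i → ℝ) (Q Q' : S → ∀ i, B → A i → ℝ) (s : S) (i : I) (b : B)
    (a : A i) :
    shapleyT A γ P1 rwd Q s i b a - shapleyT A γ P1 rwd Q' s i b a =
      γ / Fintype.card I * ∑ s', P1 s b s' * (polyVal A (Q s') - polyVal A (Q' s')) := by
  simp only [shapleyT, add_sub_add_left_eq_sub, ← mul_sub, ← sum_sub_distrib, mul_sum]
  exact sum_congr rfl fun s' _ => by ring

theorem shapleyT_contraction_general {S B I : Type*} [Fintype S] [Nonempty S]
    [Fintype B] [Nonempty B] [Fintype I] [Nonempty I]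
    (A : I → Type*) [∀ i, Fintype (A i)] [∀ i, Nonempty (A i)]
    (γ : ℝ) (hγ0 : 0 < γ)
    (P1 : S → B → S → ℝ)
    (hP1nn : ∀ s b s', 0 ≤ P1 s b s') (hP1sum : ∀ s b, ∑ s', P1 s b s' = 1)
    (rwd : ∀ i : I, S → B → A i → ℝ)
    (Q Q' : S → ∀ i, B → A i → ℝ) :
    qNorm A (fun s i b a =>
        shapleyT A γ P1 rwd Q s i b a - shapleyT A γ P1 rwd Q' s i b a) ≤
      γ * qNorm A (fun s i b a => Q s i b a - Q' s i b a) := by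
  set D : S → ∀ i, B → A i → ℝ := fun s i b a => Q s i b a - Q' s i b a
  set N := qNorm A D
  have hN : 0 ≤ N := qNorm_nonneg A D
  have hcard : (0 : ℝ) < Fintype.card I := by exact_mod_cast Fintype.card_pos
  have hVal : ‖fun s' => polyVal A (Q s') - polyVal A (Q' s')‖ ≤ N :=
    (pi_norm_le_iff_of_nonneg hN).2 fun s' =>
      (abs_polyVal_sub_le A (Q s') (Q' s')).trans (sum_norm_le_qNorm A D s')
  have hentry : ∀ s i b (a : A i),
      |shapleyT A γ P1 rwd Q s i b a - shapleyT A γ P1 rwd Q' s i b a| ≤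
        γ / Fintype.card I * N := fun s i b a => by
    rw [shapleyT_sub_shapleyT, abs_mul, abs_of_nonneg (by positivity)]
    exact mul_le_mul_of_nonneg_left ((abs_sum_mul_le_norm_of_mem_stdSimplex
      ⟨hP1nn s b, hP1sum s b⟩ _).trans hVal) (by positivity)
  rw [qNorm_eq_iSup_sum_norm]
  refine ciSup_le fun s => ?_
  calc ∑ i, ‖fun b a => shapleyT A γ P1 rwd Q s i b a - shapleyT A γ P1 rwd Q' s i b a‖
      ≤ ∑ _i : I, γ / Fintype.card I * N := sum_le_sum fun i _ =>
        (pi_norm_le_iff_of_nonneg (by positivity)).2 fun b =>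
          (pi_norm_le_iff_of_nonneg (by positivity)).2 fun a => hentry s i b a
    _ = γ * N := by
        rw [sum_const, card_univ, nsmul_eq_mul]
        field_simp

/-- The operator `T₁` is a γ-contraction in the norm
`‖Q‖ = max_s ∑_{i≠1} ‖Q_{1,i}(s)‖_max`. -/
theorem shapleyT_contraction {S B I : Type*} [Fintype S] [Nonempty S]
    [Fintype B] [Nonempty B] [Fintype I] [Nonempty I]
    (A : I → Type*) [∀ i, Fintype (A i)] [∀ i, Nonempty (A i)]
    (γ : ℝ) (hγ0 : 0 < γ) (hγ1 : γ < 1)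
    (P1 : S → B → S → ℝ)
    (hP1nn : ∀ s b s', 0 ≤ P1 s b s') (hP1sum : ∀ s b, ∑ s', P1 s b s' = 1)
    (rwd : ∀ i : I, S → B → A i → ℝ)
    (Q Q' : S → ∀ i, B → A i → ℝ) :
    qNorm A (fun s i b a =>
        shapleyT A γ P1 rwd Q s i b a - shapleyT A γ P1 rwd Q' s i b a) ≤
      γ * qNorm A (fun s i b a => Q s i b a - Q' s i b a) :=
  shapleyT_contraction_general A γ hγ0 P1 hP1nn hP1sum rwd Q Q'
end

section
/- Consider the entropy-regularized multiplicative weights update π_i^{(t+1)}(a_i) ∝ (π_i^{(t)}(a_i))^{1−η^{(t)}τ} exp(η^{(t)} [r_i π^{(t)}]_{a_i}) in a game with payoffs bounded by 0 ≤ [r_i π]_{a_i} ≤ R, starting from uniform π_i^{(0)}. Then for every t ≥ 0 and every a_i ∈ A_i, π_i^{(t)}(a_i) ≥ (1/|A_i|) exp(−R/τ), provided 0 ≤ η^{(t)} τ ≤ 1; i.e., all iterates remain in the set Ω_i = {π_i ∈ Δ(A_i) : π_i(a_i) ≥ (1/|A_i|) e^{−R/τ} for all a_i}. -/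
/-! Each iterate is a probability vector bounded below by `c = e^{-R/τ} / |A|`. Inductively, the
numerator of the update at `a` is at least `π(a)^{1-ητ} ≥ c^{1-ητ}`, while by Jensen's inequality
for the concave map `x ↦ x^{1-ητ}` the normaliser is at most `|A|^{ητ} e^{ηR}`. The floor `c` is
exactly the value with `c^{1-ητ} = c · |A|^{ητ} e^{ηR}`, so it is preserved. -/

open Finset

theorem Real.sum_rpow_le_card_rpow_mul_rpow_sum {ι : Type*} (s : Finset ι) {x : ι → ℝ}
    (hx : ∀ i ∈ s, 0 ≤ x i) {p : ℝ} (hp₀ : 0 ≤ p) (hp₁ : p ≤ 1) :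
    ∑ i ∈ s, x i ^ p ≤ (#s : ℝ) ^ (1 - p) * (∑ i ∈ s, x i) ^ p := by
  rcases s.eq_empty_or_nonempty with rfl | hs
  · simp only [sum_empty, card_empty, Nat.cast_zero]
    positivity
  have hk : (0 : ℝ) < #s := by exact_mod_cast hs.card_pos
  have jensen := (concaveOn_rpow hp₀ hp₁).le_map_sum (t := s) (w := fun _ => (#s : ℝ)⁻¹)
    (p := x) (fun _ _ => by positivity) (by simp [hk.ne']) hx
  simp only [smul_eq_mul, ← mul_sum] at jensen
  rw [mul_rpow (by positivity) (sum_nonneg hx), inv_rpow hk.le, inv_mul_le_iff₀ hk] at jensen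
  calc ∑ i ∈ s, x i ^ p ≤ #s * (((#s : ℝ) ^ p)⁻¹ * (∑ i ∈ s, x i) ^ p) := jensen
    _ = (#s : ℝ) ^ (1 - p) * (∑ i ∈ s, x i) ^ p := by
      rw [rpow_sub hk, rpow_one]; ring

section regularizedMWU

open Real

variable {A : Type*} [Fintype A] (τ η : ℝ) (u p : A → ℝ)

noncomputable def mwuWeight (a : A) : ℝ := p a ^ (1 - η * τ) * exp (η * u a)

noncomputable def regularizedMWU (a : A) : ℝ :=
  mwuWeight τ η u p a / ∑ b, mwuWeight τ η u p b

variable {τ η u p} {R : ℝ}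

theorem sum_mwuWeight_pos [Nonempty A] (hp : ∀ a, 0 < p a) : 0 < ∑ a, mwuWeight τ η u p a :=
  sum_pos (fun a _ => mul_pos (rpow_pos_of_pos (hp a) _) (exp_pos _)) univ_nonempty

theorem sum_regularizedMWU [Nonempty A] (hp : ∀ a, 0 < p a) :
    ∑ a, regularizedMWU τ η u p a = 1 := by
  simp only [regularizedMWU, ← sum_div, div_self (sum_mwuWeight_pos hp).ne']

theorem sum_mwuWeight_le (hp : ∀ a, 0 ≤ p a) (hp₁ : ∑ a, p a = 1) (hη : 0 ≤ η)
    (hητ₀ : 0 ≤ η * τ) (hητ₁ : η * τ ≤ 1) (hu : ∀ a, u a ≤ R) :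
    ∑ a, mwuWeight τ η u p a ≤ (Fintype.card A : ℝ) ^ (η * τ) * exp (η * R) := by
  have jensen := sum_rpow_le_card_rpow_mul_rpow_sum univ (fun a _ => hp a)
    (p := 1 - η * τ) (by linarith) (by linarith)
  rw [hp₁, one_rpow, mul_one, sub_sub_cancel, card_univ] at jensen
  calc ∑ a, p a ^ (1 - η * τ) * exp (η * u a) ≤ ∑ a, p a ^ (1 - η * τ) * exp (η * R) := by
        gcongr with a
        · exact rpow_nonneg (hp a) _
        · exact hu a
    _ ≤ (Fintype.card A : ℝ) ^ (η * τ) * exp (η * R) := by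
        rw [← sum_mul]; gcongr

theorem one_div_mul_exp_neg_rpow_one_sub {n : ℝ} (hn : 0 < n) (x s : ℝ) :
    (1 / n * exp (-x)) ^ (1 - s) = 1 / n * exp (-x) * (n ^ s * exp (s * x)) := by
  have hc : 0 < 1 / n * exp (-x) := by positivity
  rw [rpow_sub hc, rpow_one, mul_rpow (by positivity) (exp_pos _).le, div_rpow zero_le_one hn.le,
    one_rpow, ← exp_mul, div_eq_mul_inv, mul_inv, inv_div, ← exp_neg]
  ring_nf

theorem le_regularizedMWU (hτ : 0 < τ) (hη : 0 ≤ η) (hητ : η * τ ≤ 1)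
    (hu₀ : ∀ a, 0 ≤ u a) (hu : ∀ a, u a ≤ R) (hp₁ : ∑ a, p a = 1)
    (hp : ∀ a, 1 / (Fintype.card A : ℝ) * exp (-(R / τ)) ≤ p a) (a : A) :
    1 / (Fintype.card A : ℝ) * exp (-(R / τ)) ≤ regularizedMWU τ η u p a := by
  set c := 1 / (Fintype.card A : ℝ) * exp (-(R / τ))
  have : Nonempty A := ⟨a⟩
  have hn : (0 : ℝ) < Fintype.card A := by exact_mod_cast Fintype.card_pos
  have hc : 0 < c := by positivity
  have hp_pos : ∀ a, 0 < p a := fun a => hc.trans_le (hp a)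
  have hZ := sum_mwuWeight_le (fun a => (hp_pos a).le) hp₁ hη (by positivity) hητ hu
  have hfloor : c ^ (1 - η * τ) = c * ((Fintype.card A : ℝ) ^ (η * τ) * exp (η * R)) := by
    rw [one_div_mul_exp_neg_rpow_one_sub hn, mul_assoc η, mul_div_cancel₀ _ hτ.ne']
  rw [regularizedMWU, le_div_iff₀ (sum_mwuWeight_pos hp_pos)]
  calc c * ∑ b, mwuWeight τ η u p b
      ≤ c * ((Fintype.card A : ℝ) ^ (η * τ) * exp (η * R)) := by gcongr
    _ = c ^ (1 - η * τ) := hfloor.symm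
    _ ≤ p a ^ (1 - η * τ) := by gcongr; exact hp a
    _ ≤ mwuWeight τ η u p a :=
        le_mul_of_one_le_right (rpow_nonneg (hp_pos a).le _) (one_le_exp (mul_nonneg hη (hu₀ a)))

end regularizedMWU

/-- Iterates of the entropy-regularized multiplicative weights update, started from the uniform
distribution and with payoffs in `[0, R]`, stay in
`Ω = {π ∈ Δ(A) : π(a) ≥ (1/|A|) e^{−R/τ} for all a}`, provided `0 ≤ η_t τ ≤ 1`. -/
theorem regularized_MWU_iterates_lower_bound {A : Type*} [Fintype A] [Nonempty A]
    (τ R : ℝ) (hτ : 0 < τ) (hR : 0 ≤ R)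
    (η : ℕ → ℝ) (hη0 : ∀ t, 0 < η t) (hητ : ∀ t, η t * τ ≤ 1)
    -- u t a = [r_i π^{(t)}]_a : the expected payoff of pure action a at iteration t
    (u : ℕ → A → ℝ) (hunn : ∀ t a, 0 ≤ u t a) (hub : ∀ t a, u t a ≤ R)
    (π : ℕ → A → ℝ)
    (hinit : ∀ a, π 0 a = 1 / (Fintype.card A : ℝ))
    (hupdate : ∀ t a, π (t + 1) a =
      (π t a) ^ (1 - η t * τ) * Real.exp (η t * u t a) /
        ∑ b, (π t b) ^ (1 - η t * τ) * Real.exp (η t * u t b)) :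
    ∀ t a, (1 / (Fintype.card A : ℝ)) * Real.exp (-(R / τ)) ≤ π t a := by
  have hn : (0 : ℝ) < Fintype.card A := by exact_mod_cast Fintype.card_pos
  have hc : 0 < 1 / (Fintype.card A : ℝ) * Real.exp (-(R / τ)) := by positivity
  have hstep : ∀ t, π (t + 1) = regularizedMWU τ (η t) (u t) (π t) := fun t => funext (hupdate t)
  have invariant : ∀ t, (∑ a, π t a = 1) ∧
      ∀ a, 1 / (Fintype.card A : ℝ) * Real.exp (-(R / τ)) ≤ π t a := by
    intro t
    induction t with
    | zero =>
      refine ⟨by simp [hinit, hn.ne'], fun a => ?_⟩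
      rw [hinit]
      exact mul_le_of_le_one_right (by positivity)
        (Real.exp_le_one_iff.2 (neg_nonpos.2 (div_nonneg hR hτ.le)))
    | succ t ih =>
      rw [hstep]
      exact ⟨sum_regularizedMWU fun a => hc.trans_le (ih.2 a),
        le_regularizedMWU hτ (hη0 t).le (hητ t) (hunn t) (hub t) ih.1 ih.2⟩
  exact fun t => (invariant t).2
end

section
/- Suppose a joint (possibly correlated) per-state policy π : S → Δ(Π_i A_i) and its per-player marginals π_i : S → Δ(A_i) are given, and the transition kernel satisfies P(s'|s, a) = Σ_{i∈C} F_i(s'|s, a_i) for some subset C of players. Then the induced state-transition kernels coincide: Σ_a P(s'|s,a) π(a|s) = Σ_a P(s'|s,a) π̂(a|s), where π̂(·|s) = Π_i π_i(·|s) is the product of marginals. In particular, the discounted state visitation measures of π and π̂ from any initial state are equal. -/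
/-!
The expected value of `∑_{i ∈ C} F_i(s' | s, a_i)` under a joint law of `a` only involves the
one-dimensional marginals of that law, and the product of the marginals of `π(·|s)` has the same
marginals as `π(·|s)`. So the two policies induce the same one-step kernel, and therefore the same
multi-step kernels and visitation measures.
-/

/-- Iterated application of a state-transition kernel `K : S → S → ℝ`. -/
def iterK {S : Type*} [Fintype S] [DecidableEq S] (K : S → S → ℝ) : ℕ → S → S → ℝ
  | 0, s, s' => if s = s' then 1 else 0
  | (t + 1), s, s' => ∑ u, K s u * iterK K t u s'

open Finset

section Marginal

variable {N R : Type*} [Fintype N] [DecidableEq N] [CommSemiring R] {A : N → Type*}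
  [∀ i, Fintype (A i)] [∀ i, DecidableEq (A i)]

def marginal (μ : (∀ j, A j) → R) (i : N) (c : A i) : R :=
  ∑ b, if b i = c then μ b else 0

theorem sum_mul_marginal (μ : (∀ j, A j) → R) (i : N) (g : A i → R) :
    ∑ c, g c * marginal μ i c = ∑ a, g (a i) * μ a := by
  simp only [marginal, mul_sum, mul_ite, mul_zero]
  rw [sum_comm]
  exact sum_congr rfl fun b _ => by simp

theorem sum_marginal (μ : (∀ j, A j) → R) (i : N) : ∑ c, marginal μ i c = ∑ a, μ a := by
  simpa using sum_mul_marginal μ i 1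

theorem marginal_prod (M : ∀ j, A j → R) (hM : ∀ j, ∑ x, M j x = 1) (i : N) (c : A i) :
    marginal (fun a => ∏ j, M j (a j)) i c = M i c := by
  -- Cutting the `i`-th factor down to `c` makes the marginal a product of sums.
  set M' : ∀ j, A j → R := Function.update M i fun x => if x = c then M i x else 0
  have hM'_prod (b : ∀ j, A j) :
      (if b i = c then ∏ j, M j (b j) else 0) = ∏ j, M' j (b j) := by
    have h_off : ∏ j ∈ univ.erase i, M' j (b j) = ∏ j ∈ univ.erase i, M j (b j) :=
      prod_congr rfl fun j hj => by simp [M', Function.update_of_ne (ne_of_mem_erase hj)]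
    rw [← mul_prod_erase univ _ (mem_univ i), ← mul_prod_erase univ _ (mem_univ i), h_off]
    simp [M', ite_mul]
  calc marginal (fun a => ∏ j, M j (a j)) i c
      = ∑ b : ∀ j, A j, ∏ j, M' j (b j) := sum_congr rfl fun b _ => hM'_prod b
    _ = ∏ j, ∑ x, M' j x := (Fintype.prod_sum M').symm
    _ = M i c := by
      rw [Fintype.prod_eq_single i fun j hj => by simp [M', Function.update_of_ne hj, hM j]]
      simp [M']

theorem marginal_prod_marginal (μ : (∀ j, A j) → R) (hμ : ∑ a, μ a = 1) (i : N) (c : A i) :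
    marginal (fun a => ∏ j, marginal μ j (a j)) i c = marginal μ i c :=
  marginal_prod _ (fun j => (sum_marginal μ j).trans hμ) i c

theorem sum_sum_mul_eq_of_marginal_eq {μ ν : (∀ j, A j) → R}
    (h : ∀ i c, marginal μ i c = marginal ν i c) (C : Finset N) (f : ∀ i, A i → R) :
    ∑ a, (∑ i ∈ C, f i (a i)) * μ a = ∑ a, (∑ i ∈ C, f i (a i)) * ν a := by
  simp only [sum_mul]
  rw [sum_comm, sum_comm (s := univ)]
  refine sum_congr rfl fun i _ => ?_
  rw [← sum_mul_marginal, ← sum_mul_marginal]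
  simp only [h]

end Marginal

theorem marginalization_preserves_kernel_general {S N : Type*} [Fintype S] [DecidableEq S]
    [Fintype N] [DecidableEq N]
    (A : N → Type*) [∀ i, Fintype (A i)] [∀ i, DecidableEq (A i)]
    (C : Finset N)
    (P : S → (∀ i, A i) → S → ℝ)
    (F : ∀ i, S → A i → S → ℝ)
    (hP : ∀ s (a : ∀ i, A i) s', P s a s' = ∑ i ∈ C, F i s (a i) s')
    (π : S → (∀ i, A i) → ℝ)
    (hπsum : ∀ s, ∑ a, π s a = 1) :
    -- the induced kernels coincide
    (∀ s s', (∑ a : ∀ i, A i, P s a s' * π s a) =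
      ∑ a : ∀ i, A i, P s a s' *
        ∏ i, (∑ b : ∀ k, A k, if b i = a i then π s b else 0)) ∧
    -- hence all t-step transition probabilities coincide
    (∀ (t : ℕ) (s s' : S),
      iterK (fun s s' => ∑ a : ∀ i, A i, P s a s' * π s a) t s s' =
      iterK (fun s s' => ∑ a : ∀ i, A i, P s a s' *
        ∏ i, (∑ b : ∀ k, A k, if b i = a i then π s b else 0)) t s s') ∧
    -- and the discounted state visitation measures coincide
    (∀ (γ : ℝ), 0 < γ → γ < 1 → ∀ (s s'' : S),
      (1 - γ) * ∑' t : ℕ, γ ^ t *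
        iterK (fun s s' => ∑ a : ∀ i, A i, P s a s' * π s a) t s s'' =
      (1 - γ) * ∑' t : ℕ, γ ^ t *
        iterK (fun s s' => ∑ a : ∀ i, A i, P s a s' *
          ∏ i, (∑ b : ∀ k, A k, if b i = a i then π s b else 0)) t s s'') := by
  have hkernel : (fun s s' => ∑ a : ∀ i, A i, P s a s' * π s a) =
      fun s s' => ∑ a : ∀ i, A i, P s a s' *
        ∏ i, (∑ b : ∀ k, A k, if b i = a i then π s b else 0) := by
    funext s s'
    simp only [hP]
    exact sum_sum_mul_eq_of_marginal_eq
      (fun i c => (marginal_prod_marginal (π s) (hπsum s) i c).symm) C (fun i c => F i s c s')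
  exact ⟨fun s s' => congrFun₂ hkernel s s', fun t s s' => by rw [hkernel],
    fun γ _ _ s s'' => by rw [hkernel]⟩

/-- If the transitions decompose as `P(s'|s,a) = ∑_{i∈C} F_i(s'|s,a_i)`, then a joint per-state
policy and the product of its per-player marginals induce the same state-transition kernel; in
particular their discounted state visitation measures coincide. -/
theorem marginalization_preserves_kernel {S N : Type*} [Fintype S] [DecidableEq S]
    [Fintype N] [DecidableEq N]
    (A : N → Type*) [∀ i, Fintype (A i)] [∀ i, Nonempty (A i)] [∀ i, DecidableEq (A i)]
    (C : Finset N)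
    (P : S → (∀ i, A i) → S → ℝ)
    (F : ∀ i, S → A i → S → ℝ)
    (hP : ∀ s (a : ∀ i, A i) s', P s a s' = ∑ i ∈ C, F i s (a i) s')
    (π : S → (∀ i, A i) → ℝ)
    (hπnn : ∀ s a, 0 ≤ π s a) (hπsum : ∀ s, ∑ a, π s a = 1) :
    -- the induced kernels coincide
    (∀ s s', (∑ a : ∀ i, A i, P s a s' * π s a) =
      ∑ a : ∀ i, A i, P s a s' *
        ∏ i, (∑ b : ∀ k, A k, if b i = a i then π s b else 0)) ∧
    -- hence all t-step transition probabilities coincide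
    (∀ (t : ℕ) (s s' : S),
      iterK (fun s s' => ∑ a : ∀ i, A i, P s a s' * π s a) t s s' =
      iterK (fun s s' => ∑ a : ∀ i, A i, P s a s' *
        ∏ i, (∑ b : ∀ k, A k, if b i = a i then π s b else 0)) t s s') ∧
    -- and the discounted state visitation measures coincide
    (∀ (γ : ℝ), 0 < γ → γ < 1 → ∀ (s s'' : S),
      (1 - γ) * ∑' t : ℕ, γ ^ t *
        iterK (fun s s' => ∑ a : ∀ i, A i, P s a s' * π s a) t s s'' =
      (1 - γ) * ∑' t : ℕ, γ ^ t *
        iterK (fun s s' => ∑ a : ∀ i, A i, P s a s' *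
          ∏ i, (∑ b : ∀ k, A k, if b i = a i then π s b else 0)) t s s'') :=
  marginalization_preserves_kernel_general A C P F hP π hπsum
end
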